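/- arXiv:1703.03513 — 8 statements merged into one kernel-verified Lean document; each statement's English description precedes it below -/
import Mathlib

section
/- Let r ≥ 2 and let H be an r-graph on an n-element vertex set V. Suppose that for all disjoint sets X, Y ⊆ V such that X is nonempty and independent and |Y| < (r−1)|X|, there is an edge of H meeting X and disjoint from Y. Then H has a perfect fractional matching. -/
/-!
By LP duality (separating a point from the compact convex image of a simplex), `H` has a perfect
fractional matching unless some weighting `y : V → ℝ` has nonnegative sum on every edge but
negative total sum. Given such `y`, for each `t > 0` the set `X = {y ≤ -t}` is independent and no
edge meeting `X` avoids `Y = {(r - 1) y ≥ t}`, so the hypothesis forces `(r - 1)|X| ≤ |Y|`. By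
Hall's theorem every negative vertex `a` then gets `r - 1` private vertices `w` with
`(r - 1) y w ≥ -y a`, so the positive part of `y` outweighs its negative part.
-/

open Finset

section

variable {V : Type*} [DecidableEq V]

theorem exists_injective_of_mul_card_sublevel_le_card_superlevel [Fintype V] {k : ℕ}
    (y : V → ℝ)
    (h : ∀ t : ℝ, 0 < t → k * #{v | y v ≤ -t} ≤ #{v | t ≤ k * y v}) :
    ∃ f : {v // y v < 0} × Fin k → V, Function.Injective f ∧ ∀ p, -y p.1 ≤ k * y (f p) := by
  let N : {v // y v < 0} × Fin k → Finset V := fun p ↦ {w | -y p.1 ≤ k * y w}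
  suffices hall : ∀ S, #S ≤ #(S.biUnion N) by
    obtain ⟨f, hf_inj, hf⟩ := (all_card_le_biUnion_card_iff_exists_injective N).mp hall
    exact ⟨f, hf_inj, fun p ↦ (mem_filter.1 (hf p)).2⟩
  intro S
  obtain rfl | hS := S.eq_empty_or_nonempty
  · simp
  obtain ⟨p₀, hp₀, hmax⟩ := S.exists_max_image (fun p ↦ y p.1) hS
  have hlevel := h (-y p₀.1) (neg_pos.2 p₀.1.2)
  rw [neg_neg] at hlevel
  calc #S ≤ #(S.image Prod.fst) * #(S.image Prod.snd) :=
        (card_le_card subset_product).trans_eq (card_product _ _)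
    _ ≤ #{v | y v ≤ y p₀.1} * k := by
        gcongr
        · refine card_le_card_of_injOn Subtype.val (fun a ha ↦ ?_) Subtype.val_injective.injOn
          obtain ⟨p, hp, rfl⟩ := mem_image.1 ha
          simpa using hmax p hp
        · exact (card_le_univ _).trans_eq (Fintype.card_fin k)
    _ ≤ #(N p₀) := by rw [mul_comm]; exact hlevel
    _ ≤ #(S.biUnion N) := card_le_card (subset_biUnion_of_mem N hp₀)

theorem sum_nonneg_of_mul_card_sublevel_le_card_superlevel [Fintype V] {k : ℕ} (hk : 0 < k)
    (y : V → ℝ)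
    (h : ∀ t : ℝ, 0 < t → k * #{v | y v ≤ -t} ≤ #{v | t ≤ k * y v}) :
    0 ≤ ∑ v, y v := by
  obtain ⟨f, hf_inj, hf⟩ := exists_injective_of_mul_card_sublevel_le_card_superlevel y h
  have hk' : (0 : ℝ) < k := by exact_mod_cast hk
  have hf_nonneg : ∀ p, 0 ≤ y (f p) := fun p ↦ by nlinarith [hf p, p.1.2]
  have hmass : (k : ℝ) * ∑ v with y v < 0, -y v ≤ k * ∑ v with 0 ≤ y v, y v :=
    calc (k : ℝ) * ∑ v with y v < 0, -y v = ∑ p : {v // y v < 0} × Fin k, -y p.1 := by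
          simp only [Fintype.sum_prod_type, sum_const, card_univ, Fintype.card_fin, nsmul_eq_mul,
            ← mul_sum]
          rw [sum_subtype (p := fun v ↦ y v < 0) _ fun v ↦ by simp]
      _ ≤ ∑ p, k * y (f p) := sum_le_sum fun p _ ↦ hf p
      _ = k * ∑ w ∈ univ.image f, y w := by rw [sum_image hf_inj.injOn, mul_sum]
      _ ≤ k * ∑ v with 0 ≤ y v, y v := by
          refine mul_le_mul_of_nonneg_left (sum_le_sum_of_subset_of_nonneg (fun w hw ↦ ?_)
            fun w hw _ ↦ (mem_filter.1 hw).2) hk'.le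
          obtain ⟨p, -, rfl⟩ := mem_image.1 hw
          exact mem_filter.2 ⟨mem_univ _, hf_nonneg p⟩
  have hsplit := sum_filter_add_sum_filter_not univ (fun v ↦ 0 ≤ y v) y
  simp only [not_le] at hsplit
  have := le_of_mul_le_mul_left hmass hk'
  rw [sum_neg_distrib] at this
  linarith

theorem mul_card_sublevel_le_card_superlevel [Fintype V] {r : ℕ} (hr : 2 ≤ r)
    {H : Finset (Finset V)} (hunif : ∀ e ∈ H, #e = r)
    (hexp : ∀ X Y : Finset V, Disjoint X Y → X.Nonempty →
      (∀ e ∈ H, ¬ e ⊆ X) → #Y < (r - 1) * #X →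
      ∃ e ∈ H, (e ∩ X).Nonempty ∧ Disjoint e Y)
    {y : V → ℝ} (hy : ∀ e ∈ H, 0 ≤ ∑ v ∈ e, y v) {t : ℝ} (ht : 0 < t) :
    (r - 1) * #{v | y v ≤ -t} ≤ #{v | t ≤ ((r - 1 : ℕ) : ℝ) * y v} := by
  set k : ℝ := ((r - 1 : ℕ) : ℝ)
  have hk : 0 < k := by simp only [k]; exact_mod_cast (by omega : 0 < r - 1)
  set X : Finset V := {v | y v ≤ -t}
  set Y : Finset V := {v | t ≤ k * y v}
  obtain hX | hX := X.eq_empty_or_nonempty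
  · simp [hX]
  by_contra! hlt
  have hdisj : Disjoint X Y := disjoint_filter.2 fun v _ hvX hvY ↦ by nlinarith
  have hindep : ∀ e ∈ H, ¬ e ⊆ X := fun e he heX ↦ by
    have hsum : ∑ v ∈ e, y v ≤ ∑ v ∈ e, -t :=
      sum_le_sum fun v hv ↦ (mem_filter.1 (heX hv)).2
    rw [sum_const, hunif e he, nsmul_eq_mul] at hsum
    have : (0 : ℝ) < r := by positivity
    nlinarith [hy e he]
  obtain ⟨e, he, ⟨u, hu⟩, heY⟩ := hexp X Y hdisj hX hindep hlt
  obtain ⟨hue, huX⟩ := mem_inter.1 hu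
  -- `u` contributes at most `-t` to the edge sum, each other vertex less than `t / (r - 1)`
  have hrest : k * ∑ v ∈ e.erase u, y v < k * t := by
    have hne : (e.erase u).Nonempty := by
      rw [← card_pos, card_erase_of_mem hue, hunif e he]; omega
    calc k * ∑ v ∈ e.erase u, y v = ∑ v ∈ e.erase u, k * y v := mul_sum _ _ _
      _ < ∑ v ∈ e.erase u, t := sum_lt_sum_of_nonempty hne fun v hv ↦
          not_le.1 fun hvY ↦
            disjoint_left.1 heY (mem_of_mem_erase hv) (mem_filter.2 ⟨mem_univ _, hvY⟩)
      _ = k * t := by rw [sum_const, card_erase_of_mem hue, hunif e he, nsmul_eq_mul]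
  have hu_le : y u ≤ -t := (mem_filter.1 huX).2
  have := add_sum_erase e y hue
  nlinarith [hy e he]

-- The image of the standard simplex consists of the degree vectors of fractional matchings of
-- total weight `1`; for `r`-uniform `H` on `n` vertices it contains the constant vector `r / n`
-- iff `H` has a perfect fractional matching.
noncomputable def incidenceMap (H : Finset (Finset V)) : (H → ℝ) →ₗ[ℝ] V → ℝ :=
  Fintype.linearCombination ℝ fun e v ↦ if v ∈ (e : Finset V) then 1 else 0

theorem incidenceMap_apply (H : Finset (Finset V)) (w : H → ℝ) (v : V) :
    incidenceMap H w v = ∑ e : H, if v ∈ (e : Finset V) then w e else 0 := by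
  simp [incidenceMap, Fintype.linearCombination_apply]

theorem incidenceMap_single (H : Finset (Finset V)) (e : H) :
    incidenceMap H (Pi.single e 1) = fun v ↦ if v ∈ (e : Finset V) then 1 else 0 := by
  simp [incidenceMap]

theorem exists_perfect_fractional_matching_of_mem_image_stdSimplex [Fintype V] {r : ℕ}
    (hr : 0 < r) {H : Finset (Finset V)}
    (hmem : (fun _ ↦ (r : ℝ) / Fintype.card V) ∈ incidenceMap H '' stdSimplex ℝ H) :
    ∃ φ : Finset V → ℝ, (∀ e ∈ H, 0 ≤ φ e) ∧ (∀ v, ∑ e ∈ H with v ∈ e, φ e = 1) ∧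
      ∑ e ∈ H, φ e = Fintype.card V / r := by
  obtain ⟨w, ⟨hw_nonneg, hw_sum⟩, hw⟩ := hmem
  set n : ℝ := (Fintype.card V : ℝ)
  let φ : Finset V → ℝ := fun e ↦ if he : e ∈ H then n / r * w ⟨e, he⟩ else 0
  have hφ : ∀ e : H, φ e = n / r * w e := fun e ↦ dif_pos e.2
  refine ⟨φ, fun e he ↦ by simpa [φ, he] using mul_nonneg (by positivity) (hw_nonneg _),
    ?_, ?_⟩
  · intro v
    have : n ≠ 0 := by simp only [n]; exact_mod_cast (Fintype.card_pos_iff.2 ⟨v⟩).ne'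
    rw [sum_filter, ← sum_coe_sort H]
    simp only [hφ, ← mul_ite_zero, ← mul_sum, ← incidenceMap_apply, hw]
    field_simp
  · rw [← sum_coe_sort H]
    simp only [hφ, ← mul_sum, hw_sum, mul_one]

theorem exists_sum_neg_of_notMem_image_stdSimplex [Fintype V] [Nonempty V] {r : ℕ} (hr : 0 < r)
    {H : Finset (Finset V)} (hunif : ∀ e ∈ H, #e = r)
    (hmem : (fun _ ↦ (r : ℝ) / Fintype.card V) ∉ incidenceMap H '' stdSimplex ℝ H) :
    ∃ y : V → ℝ, (∀ e ∈ H, 0 ≤ ∑ v ∈ e, y v) ∧ ∑ v, y v < 0 := by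
  set n : ℝ := (Fintype.card V : ℝ)
  have hn : 0 < n := by simp only [n]; exact_mod_cast Fintype.card_pos
  have hr' : (0 : ℝ) < r := by exact_mod_cast hr
  obtain ⟨f, u, hfu, hu⟩ := geometric_hahn_banach_point_closed
    ((convex_stdSimplex ℝ H).linear_image _)
    ((isCompact_stdSimplex ℝ H).image (LinearMap.continuous_of_finiteDimensional _)).isClosed hmem
  set c : V → ℝ := fun v ↦ f fun j ↦ if v = j then 1 else 0
  have hf : ∀ x, f x = ∑ v, x v * c v := fun x ↦
    LinearMap.pi_apply_eq_sum_univ (f : (V → ℝ) →ₗ[ℝ] ℝ) x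
  -- shifting the separating functional by `u / r` makes every edge sum positive
  refine ⟨fun v ↦ c v - u / r, fun e he ↦ ?_, ?_⟩
  · have := hu _ ⟨Pi.single ⟨e, he⟩ 1, single_mem_stdSimplex ℝ _, rfl⟩
    rw [incidenceMap_single, hf] at this
    simp only [ite_mul, one_mul, zero_mul, sum_ite_mem, univ_inter] at this
    rw [sum_sub_distrib, sum_const, hunif e he, nsmul_eq_mul, mul_div_cancel₀ _ hr'.ne']
    linarith
  · rw [hf, ← mul_sum, div_mul_eq_mul_div, div_lt_iff₀ hn] at hfu
    rw [sum_sub_distrib, sum_const, card_univ, nsmul_eq_mul, sub_neg, mul_div_assoc',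
      lt_div_iff₀ hr']
    linarith

theorem exists_perfect_fractional_matching_of_sum_nonneg [Fintype V] [Nonempty V] {r : ℕ}
    (hr : 0 < r) {H : Finset (Finset V)} (hunif : ∀ e ∈ H, #e = r)
    (hdual : ∀ y : V → ℝ, (∀ e ∈ H, 0 ≤ ∑ v ∈ e, y v) → 0 ≤ ∑ v, y v) :
    ∃ φ : Finset V → ℝ, (∀ e ∈ H, 0 ≤ φ e) ∧ (∀ v, ∑ e ∈ H with v ∈ e, φ e = 1) ∧
      ∑ e ∈ H, φ e = Fintype.card V / r := by
  by_cases hmem : (fun _ ↦ (r : ℝ) / Fintype.card V) ∈ incidenceMap H '' stdSimplex ℝ H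
  · exact exists_perfect_fractional_matching_of_mem_image_stdSimplex hr hmem
  · obtain ⟨y, hy, hy_neg⟩ := exists_sum_neg_of_notMem_image_stdSimplex hr hunif hmem
    exact absurd (hdual y hy) (not_le.2 hy_neg)

end

/-- If `H` is an `r`-graph on a finite vertex set `V` such that for all
disjoint `X, Y ⊆ V` with `X` nonempty and independent and `|Y| < (r-1)|X|` there is an
edge meeting `X` and disjoint from `Y`, then `H` has a perfect fractional matching. -/
theorem stmt0 {V : Type*} [Fintype V] [DecidableEq V] (r : ℕ) (hr : 2 ≤ r)
    (H : Finset (Finset V)) (hunif : ∀ e ∈ H, e.card = r)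
    (hexp : ∀ X Y : Finset V, Disjoint X Y → X.Nonempty →
      (∀ e ∈ H, ¬ e ⊆ X) → Y.card < (r - 1) * X.card →
      ∃ e ∈ H, (e ∩ X).Nonempty ∧ Disjoint e Y) :
    ∃ φ : Finset V → ℝ, (∀ e ∈ H, 0 ≤ φ e ∧ φ e ≤ 1) ∧
      (∀ v : V, ∑ e ∈ H with v ∈ e, φ e ≤ 1) ∧
      ∑ e ∈ H, φ e = (Fintype.card V : ℝ) / r := by
  obtain hV | hV := isEmpty_or_nonempty V
  · exact ⟨0, by simp⟩
  obtain ⟨φ, hφ_nonneg, hφ_vertex, hφ_sum⟩ :=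
    exists_perfect_fractional_matching_of_sum_nonneg (by omega) hunif fun y hy ↦
      sum_nonneg_of_mul_card_sublevel_le_card_superlevel (k := r - 1) (by omega) y fun _ ht ↦
        mul_card_sublevel_le_card_superlevel hr hunif hexp hy ht
  refine ⟨φ, fun e he ↦ ⟨hφ_nonneg e he, ?_⟩, fun v ↦ (hφ_vertex v).le, hφ_sum⟩
  obtain ⟨v, hv⟩ : e.Nonempty := card_pos.1 (by rw [hunif e he]; omega)
  calc φ e ≤ ∑ e' ∈ H with v ∈ e', φ e' :=
        single_le_sum (fun e' he' ↦ hφ_nonneg e' (mem_filter.1 he').1) (mem_filter.2 ⟨he, hv⟩)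
    _ = 1 := hφ_vertex v
end

section
/- Let r ≥ 2 and let H be an r-graph on an n-element vertex set V. Suppose that for all disjoint sets X, Y ⊆ V such that X is nonempty and independent and |Y| ≤ (r−1)|X|, there is an edge of H meeting X and disjoint from Y. Then H has a perfect fractional matching, and the constant function w ≡ 1/r is the only fractional cover of H of weight n/r. -/
open Finset

/-!
Let `y : V → ℝ` have nonnegative sum on every edge, and for `t > 0` put `X_t = {y ≤ -t}` and
`Y_t = {(r - 1) y ≥ t}`. A nonempty `X_t` is independent, and an edge meeting `X_t` and avoiding
`Y_t` would have negative sum, so the hypothesis forces `|Y_t| > (r - 1) |X_t|`. Comparing these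
level-set counts for all `t > 0` shows that `∑ y > 0` as soon as `y` takes a negative value.
Hence a function with nonnegative edge sums and total sum `0` vanishes. Applied to `w - 1/r` this
is the uniqueness of the cover. For the matching, the same fact shows that no linear functional
separates `(r/n) 𝟙` from the convex hull of the edge indicator vectors; a convex combination
representing `(r/n) 𝟙`, rescaled by `n/r`, is a perfect fractional matching.
-/

theorem Multiset.sum_le_sum_of_card_filter_le {α : Type*} [AddCommMonoid α] [LinearOrder α]
    [IsOrderedAddMonoid α] (A B : Multiset α) (hB : ∀ b ∈ B, 0 ≤ b)
    (h : ∀ t, 0 < t → card (A.filter (t ≤ ·)) ≤ card (B.filter (t ≤ ·))) : A.sum ≤ B.sum := by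
  induction A using Multiset.strongInductionOn generalizing B with
  | ih A ih =>
  by_cases hpos : ∃ a ∈ A, 0 < a
  swap
  · push Not at hpos
    calc A.sum ≤ card A • (0 : α) := Multiset.sum_le_card_nsmul A 0 hpos
      _ = 0 := smul_zero _
      _ ≤ B.sum := Multiset.sum_nonneg hB
  obtain ⟨a₀, ha₀A, ha₀⟩ := hpos
  obtain ⟨a, haA, hmax⟩ :=
    Multiset.exists_max_image (id : α → α) (ne_of_mem_of_not_mem' ha₀A (Multiset.notMem_zero a₀))
  have ha : 0 < a := ha₀.trans_le (hmax a₀ ha₀A)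
  obtain ⟨b, hb⟩ : ∃ b, b ∈ B.filter (a ≤ ·) :=
    Multiset.card_pos_iff_exists_mem.1 <| (h a ha).trans_lt' <|
      Multiset.card_pos_iff_exists_mem.2 ⟨a, Multiset.mem_filter.2 ⟨haA, le_rfl⟩⟩
  obtain ⟨hbB, hab⟩ := Multiset.mem_filter.1 hb
  rw [← Multiset.cons_erase haA, ← Multiset.cons_erase hbB] at h ⊢
  rw [Multiset.sum_cons, Multiset.sum_cons]
  refine add_le_add hab (ih _ (Multiset.erase_lt.2 haA) _
    (fun x hx => hB x (Multiset.mem_of_mem_erase hx)) fun t ht => ?_)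
  by_cases hta : t ≤ a
  · have := h t ht
    rw [Multiset.filter_cons_of_pos _ hta, Multiset.filter_cons_of_pos _ (hta.trans hab),
      Multiset.card_cons, Multiset.card_cons] at this
    exact Nat.le_of_succ_le_succ this
  · rw [Multiset.filter_eq_nil.2 fun x hx hxt =>
      hta (hxt.trans (hmax x (Multiset.mem_of_mem_erase hx)))]
    exact Nat.zero_le _

theorem sum_pos_of_mul_card_lt {V : Type*} [Fintype V] (k : ℕ) (y : V → ℝ)
    (h : ∀ t : ℝ, 0 < t → (univ.filter (y · ≤ -t)).Nonempty →
      k * #(univ.filter (y · ≤ -t)) < #(univ.filter (t ≤ k * y ·)))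
    {v₀ : V} (hv₀ : y v₀ < 0) : 0 < ∑ v, y v := by
  have hneg : ∀ t : ℝ, 0 < t → univ.filter (fun v => t ≤ (y v)⁻) = univ.filter (y · ≤ -t) := by
    intro t ht
    refine filter_congr fun v _ => ?_
    rw [negPart_def, le_max_iff]
    constructor
    · rintro (h | h) <;> linarith
    · exact fun h => Or.inl (by linarith)
  have hpos : ∀ t : ℝ, 0 < t →
      univ.filter (fun v => t ≤ k * (y v)⁺) = univ.filter (t ≤ k * y ·) := by
    intro t ht
    refine filter_congr fun v _ => ?_
    rw [posPart_def, mul_max_of_nonneg _ _ k.cast_nonneg, le_max_iff, mul_zero]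
    exact or_iff_left ht.not_ge
  -- the extra element `(y v₀)⁻` turns the strict count inequalities into a strict sum inequality
  have hdom := Multiset.sum_le_sum_of_card_filter_le
    ((y v₀)⁻ ::ₘ k • univ.val.map (fun v => (y v)⁻)) (univ.val.map (fun v => k * (y v)⁺))
    (by simpa using fun v => mul_nonneg k.cast_nonneg (posPart_nonneg (y v))) fun t ht => ?_
  · simp only [Multiset.sum_cons, Multiset.sum_nsmul, ← sum_eq_multiset_sum, nsmul_eq_mul,
      ← mul_sum] at hdom
    have hsplit : ∑ v, y v = ∑ v, (y v)⁺ - ∑ v, (y v)⁻ := by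
      rw [← sum_sub_distrib]
      simp only [posPart_sub_negPart]
    have : 0 < k * ∑ v, y v := by
      rw [hsplit, mul_sub]
      linarith [negPart_pos_iff.2 hv₀]
    exact pos_of_mul_pos_right this k.cast_nonneg
  · rw [Multiset.filter_cons, Multiset.filter_nsmul, Multiset.card_add, Multiset.card_nsmul,
      Multiset.filter_map, Multiset.card_map, Multiset.filter_map, Multiset.card_map]
    change _ + k * #(univ.filter fun v => t ≤ (y v)⁻) ≤ #(univ.filter fun v => t ≤ k * (y v)⁺)
    rw [hneg t ht, hpos t ht]
    split_ifs with htv₀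
    · have hv₀X : v₀ ∈ univ.filter (y · ≤ -t) := hneg t ht ▸ mem_filter.2 ⟨mem_univ _, htv₀⟩
      simpa [add_comm] using Nat.succ_le_of_lt (h t ht ⟨v₀, hv₀X⟩)
    · rcases (univ.filter (y · ≤ -t)).eq_empty_or_nonempty with hX | hX
      · simp [hX]
      · simpa using (h t ht hX).le

theorem map_eq_sum_mul_map_single {R V F : Type*} [CommSemiring R] [Fintype V] [DecidableEq V]
    [FunLike F (V → R) R] [LinearMapClass F R (V → R) R] (f : F) (x : V → R) :
    f x = ∑ v, x v * f (Pi.single v 1) := by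
  conv_lhs => rw [← univ_sum_single x]
  rw [map_sum]
  refine sum_congr rfl fun v _ => ?_
  rw [← smul_eq_mul, ← map_smul, ← Pi.single_smul, smul_eq_mul, mul_one]

theorem mem_convexHull_of_forall_exists_le {E : Type*} [AddCommGroup E] [Module ℝ E]
    [TopologicalSpace E] [T2Space E] [IsTopologicalAddGroup E] [ContinuousSMul ℝ E]
    [LocallyConvexSpace ℝ E] {S : Finset E} {p : E} (h : ∀ f : E →L[ℝ] ℝ, ∃ x ∈ S, f x ≤ f p) :
    p ∈ convexHull ℝ (S : Set E) := by
  by_contra hp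
  obtain ⟨f, u, hfp, hfS⟩ := geometric_hahn_banach_point_closed (convex_convexHull ℝ _)
    (S.finite_toSet.isCompact_convexHull ℝ).isClosed hp
  obtain ⟨x, hx, hfx⟩ := h f
  linarith [hfS x (subset_convexHull ℝ _ hx)]

def IsExpanding {V : Type*} [DecidableEq V] (r : ℕ) (H : Finset (Finset V)) : Prop :=
  ∀ X Y : Finset V, Disjoint X Y → X.Nonempty → (∀ e ∈ H, ¬ e ⊆ X) → #Y ≤ (r - 1) * #X →
    ∃ e ∈ H, (e ∩ X).Nonempty ∧ Disjoint e Y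

def IsPerfectFractionalMatching {V : Type*} [DecidableEq V] (H : Finset (Finset V))
    (φ : Finset V → ℝ) : Prop :=
  (∀ e ∈ H, 0 ≤ φ e) ∧ ∀ v, ∑ e ∈ H with v ∈ e, φ e = 1

section

variable {V : Type*} [Fintype V] [DecidableEq V] {r : ℕ} {H : Finset (Finset V)}

namespace IsPerfectFractionalMatching

variable {φ : Finset V → ℝ} (hφ : IsPerfectFractionalMatching H φ)
include hφ

omit [Fintype V] in
theorem le_one {e : Finset V} (he : e ∈ H) (hne : e.Nonempty) : φ e ≤ 1 := by
  obtain ⟨v, hv⟩ := hne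
  calc φ e ≤ ∑ e' ∈ H with v ∈ e', φ e' :=
        single_le_sum (fun e' he' => hφ.1 e' (mem_filter.1 he').1) (mem_filter.2 ⟨he, hv⟩)
    _ = 1 := hφ.2 v

theorem sum_eq (hunif : ∀ e ∈ H, #e = r) (hr : (r : ℝ) ≠ 0) :
    ∑ e ∈ H, φ e = Fintype.card V / r := by
  have hcount : ∑ v, ∑ e ∈ H with v ∈ e, φ e = r * ∑ e ∈ H, φ e := by
    simp only [sum_filter]
    rw [sum_comm, mul_sum]
    refine sum_congr rfl fun e he => ?_
    rw [sum_ite_mem, univ_inter, sum_const, hunif e he, nsmul_eq_mul]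
  simp only [hφ.2, sum_const, card_univ, nsmul_eq_mul, mul_one] at hcount
  rw [hcount, mul_div_cancel_left₀ _ hr]

end IsPerfectFractionalMatching

namespace IsExpanding

variable (hH : IsExpanding r H) (hr : 2 ≤ r) (hunif : ∀ e ∈ H, #e = r)
include hH hr hunif

theorem mul_card_lt {y : V → ℝ} (hy : ∀ e ∈ H, 0 ≤ ∑ v ∈ e, y v) {t : ℝ} (ht : 0 < t)
    (hX : (univ.filter (y · ≤ -t)).Nonempty) :
    (r - 1) * #(univ.filter (y · ≤ -t)) < #(univ.filter (t ≤ (r - 1 : ℕ) * y ·)) := by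
  set k : ℝ := ((r - 1 : ℕ) : ℝ)
  have hk : 0 < k := Nat.cast_pos.2 (by omega)
  by_contra! hcard
  have hdisj : Disjoint (univ.filter (y · ≤ -t)) (univ.filter (t ≤ k * y ·)) :=
    disjoint_filter.2 fun v _ hvX hvY => by nlinarith
  have hindep : ∀ e ∈ H, ¬ e ⊆ univ.filter (y · ≤ -t) := by
    intro e he hsub
    have hle : ∑ v ∈ e, y v ≤ ∑ v ∈ e, -t := sum_le_sum fun v hv => (mem_filter.1 (hsub hv)).2
    rw [sum_const, hunif e he, nsmul_eq_mul] at hle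
    have : (0 : ℝ) < r := Nat.cast_pos.2 (by omega)
    nlinarith [hy e he]
  obtain ⟨e, he, ⟨x, hx⟩, heY⟩ := hH _ _ hdisj hX hindep hcard
  obtain ⟨hxe, hxX⟩ := mem_inter.1 hx
  have hne : (e.erase x).Nonempty := by
    rw [← card_pos, card_erase_of_mem hxe, hunif e he]
    omega
  have hrest : ∑ v ∈ e.erase x, y v < t := by
    refine lt_of_mul_lt_mul_left ?_ hk.le
    calc k * ∑ v ∈ e.erase x, y v = ∑ v ∈ e.erase x, k * y v := mul_sum _ _ _
      _ < ∑ v ∈ e.erase x, t := sum_lt_sum_of_nonempty hne fun v hv => by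
          simpa using disjoint_left.1 heY (mem_of_mem_erase hv)
      _ = k * t := by rw [sum_const, card_erase_of_mem hxe, hunif e he, nsmul_eq_mul]
  have hsum := hy e he
  rw [← add_sum_erase e y hxe] at hsum
  linarith [(mem_filter.1 hxX).2]

theorem sum_pos {y : V → ℝ} (hy : ∀ e ∈ H, 0 ≤ ∑ v ∈ e, y v) {v₀ : V} (hv₀ : y v₀ < 0) :
    0 < ∑ v, y v :=
  sum_pos_of_mul_card_lt (r - 1) y (fun _ ht hX => hH.mul_card_lt hr hunif hy ht hX) hv₀

theorem eq_zero_of_sum_eq_zero {y : V → ℝ} (hy : ∀ e ∈ H, 0 ≤ ∑ v ∈ e, y v)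
    (hsum : ∑ v, y v = 0) : y = 0 := by
  have hnonneg : ∀ v, 0 ≤ y v := fun v => not_lt.1 fun hv => (hH.sum_pos hr hunif hy hv).ne' hsum
  exact funext fun v => (sum_eq_zero_iff_of_nonneg fun v _ => hnonneg v).1 hsum v (mem_univ v)

omit [Fintype V] in
theorem nonempty [Nonempty V] : H.Nonempty := by
  obtain ⟨v⟩ := ‹Nonempty V›
  have hindep : ∀ e ∈ H, ¬ e ⊆ {v} := fun e he hsub => by
    have := card_le_card hsub
    rw [hunif e he, card_singleton] at this
    omega
  obtain ⟨e, he, -⟩ := hH {v} ∅ (disjoint_empty_right _) (singleton_nonempty v) hindep (by simp)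
  exact ⟨e, he⟩

theorem exists_card_mul_sum_le [Nonempty V] (y : V → ℝ) :
    ∃ e ∈ H, Fintype.card V * ∑ v ∈ e, y v ≤ r * ∑ v, y v := by
  by_contra! hlt
  set z : V → ℝ := fun v => Fintype.card V * y v - ∑ u, y u
  have hz_edge : ∀ e ∈ H, ∑ v ∈ e, z v = Fintype.card V * ∑ v ∈ e, y v - r * ∑ v, y v := by
    intro e he
    simp [z, sum_sub_distrib, mul_sum, hunif e he]
  have hz : z = 0 := hH.eq_zero_of_sum_eq_zero hr hunif
    (fun e he => by rw [hz_edge e he]; linarith [hlt e he])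
    (by simp [z, sum_sub_distrib, mul_sum])
  obtain ⟨e, he⟩ := hH.nonempty hr hunif
  have := hz_edge e he
  simp only [hz, Pi.zero_apply, sum_const_zero] at this
  linarith [hlt e he]

theorem exists_isPerfectFractionalMatching : ∃ φ, IsPerfectFractionalMatching H φ := by
  rcases isEmpty_or_nonempty V with hV | hV
  · exact ⟨0, fun _ _ => le_rfl, fun v => isEmptyElim v⟩
  set χ : Finset V → V → ℝ := fun e v => if v ∈ e then 1 else 0
  set n : ℝ := (Fintype.card V : ℝ)
  have hn : n ≠ 0 := Nat.cast_ne_zero.2 Fintype.card_ne_zero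
  have hχ (f : (V → ℝ) →L[ℝ] ℝ) (e : Finset V) : f (χ e) = ∑ v ∈ e, f (Pi.single v 1) := by
    rw [map_eq_sum_mul_map_single f]
    simp [χ]
  have hconst (f : (V → ℝ) →L[ℝ] ℝ) (c : ℝ) : f (fun _ => c) = c * ∑ v, f (Pi.single v 1) := by
    rw [map_eq_sum_mul_map_single f, mul_sum]
  have hp : (fun _ => (r : ℝ) / n) ∈ convexHull ℝ (H.image χ : Set (V → ℝ)) := by
    refine mem_convexHull_of_forall_exists_le fun f => ?_
    obtain ⟨e, he, hle⟩ := hH.exists_card_mul_sum_le hr hunif fun v => f (Pi.single v 1)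
    refine ⟨χ e, mem_image_of_mem χ he, ?_⟩
    rw [hχ, hconst, div_mul_eq_mul_div, le_div_iff₀ (by positivity), mul_comm]
    exact hle
  obtain ⟨w, hw0, -, hwp⟩ := mem_convexHull'.1 hp
  have hinj : Set.InjOn χ H := fun e _ e' _ h => by
    ext v
    have := congrFun h v
    by_cases hv : v ∈ e <;> by_cases hv' : v ∈ e' <;> simp_all [χ]
  refine ⟨fun e => n / r * w (χ e), fun e he => ?_, fun v => ?_⟩
  · exact mul_nonneg (by positivity) (hw0 _ (mem_image_of_mem χ he))
  · have hwv := congrFun hwp v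
    rw [Finset.sum_apply, sum_image hinj] at hwv
    calc ∑ e ∈ H with v ∈ e, n / r * w (χ e) = n / r * ∑ e ∈ H, (w (χ e) • χ e) v := by
          rw [mul_sum, sum_filter]
          refine sum_congr rfl fun e _ => ?_
          simp [χ]
      _ = 1 := by
          rw [hwv]
          field_simp

theorem eq_one_div_of_cover {w : V → ℝ} (hcov : ∀ e ∈ H, 1 ≤ ∑ v ∈ e, w v)
    (hsum : ∑ v, w v = Fintype.card V / r) (v : V) : w v = 1 / r := by
  have hr0 : (r : ℝ) ≠ 0 := Nat.cast_ne_zero.2 (by omega)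
  have hzero := hH.eq_zero_of_sum_eq_zero hr hunif (y := fun v => w v - 1 / r)
    (fun e he => ?_) ?_
  · simpa [sub_eq_zero] using congrFun hzero v
  · simp [sum_sub_distrib, hunif e he, hr0]
    linarith [hcov e he]
  · simp [sum_sub_distrib, hsum, div_eq_mul_inv]

end IsExpanding

end

/-- If `H` is an `r`-graph on a finite vertex set `V` such that for all
disjoint `X, Y ⊆ V` with `X` nonempty and independent and `|Y| ≤ (r-1)|X|` there is an
edge meeting `X` and disjoint from `Y`, then `H` has a perfect fractional matching and
the constant function `1/r` is the only fractional cover of weight `n/r`. -/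
theorem stmt1 {V : Type*} [Fintype V] [DecidableEq V] (r : ℕ) (hr : 2 ≤ r)
    (H : Finset (Finset V)) (hunif : ∀ e ∈ H, e.card = r)
    (hexp : ∀ X Y : Finset V, Disjoint X Y → X.Nonempty →
      (∀ e ∈ H, ¬ e ⊆ X) → Y.card ≤ (r - 1) * X.card →
      ∃ e ∈ H, (e ∩ X).Nonempty ∧ Disjoint e Y) :
    (∃ φ : Finset V → ℝ, (∀ e ∈ H, 0 ≤ φ e ∧ φ e ≤ 1) ∧
        (∀ v : V, ∑ e ∈ H with v ∈ e, φ e ≤ 1) ∧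
        ∑ e ∈ H, φ e = (Fintype.card V : ℝ) / r) ∧
      (∀ w : V → ℝ, (∀ v, 0 ≤ w v ∧ w v ≤ 1) →
        (∀ e ∈ H, 1 ≤ ∑ v ∈ e, w v) →
        (∑ v : V, w v = (Fintype.card V : ℝ) / r) →
        ∀ v : V, w v = 1 / r) := by
  have hH : IsExpanding r H := hexp
  have hr0 : (r : ℝ) ≠ 0 := Nat.cast_ne_zero.2 (by omega)
  have hne : ∀ e ∈ H, e.Nonempty := fun e he => card_pos.1 (by rw [hunif e he]; omega)
  obtain ⟨φ, hφ⟩ := hH.exists_isPerfectFractionalMatching hr hunif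
  refine ⟨⟨φ, fun e he => ⟨hφ.1 e he, hφ.le_one he (hne e he)⟩, fun v => (hφ.2 v).le,
    hφ.sum_eq hunif hr0⟩, fun w _ hcov hsum => hH.eq_one_div_of_cover hr hunif hcov hsum⟩
end

section
/- A finite simple graph G has a perfect fractional matching if and only if |N(I)| ≥ |I| for every independent set I of vertices of G, where N(I) denotes the set of vertices having at least one neighbor in I. -/
open Finset

section Aux

variable {V : Type*} [Fintype V] [DecidableEq V] (G : SimpleGraph V) [DecidableRel G.Adj]

lemma aux_swap (φ : Sym2 V → ℝ) (A : Finset V) :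
    ∑ v ∈ A, ∑ e ∈ G.edgeFinset with v ∈ e, φ e
      = ∑ e ∈ G.edgeFinset, ((A.filter (· ∈ e)).card : ℝ) * φ e := by
  simp_rw [Finset.sum_filter]
  rw [Finset.sum_comm]
  refine Finset.sum_congr rfl fun e _ => ?_
  rw [← Finset.sum_filter, Finset.sum_const, nsmul_eq_mul]

lemma aux_filter_pair (A : Finset V) (u w : V) :
    A.filter (· ∈ s(u, w)) = A ∩ {u, w} := by
  ext x
  simp [Sym2.mem_iff, and_comm]

end Aux

/-- A finite simple graph has a perfect fractional matching iff
`|N(I)| ≥ |I|` for every independent set `I`. -/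
theorem stmt2 {V : Type*} [Fintype V] [DecidableEq V]
    (G : SimpleGraph V) [DecidableRel G.Adj] :
    (∃ φ : Sym2 V → ℝ, (∀ e ∈ G.edgeFinset, 0 ≤ φ e ∧ φ e ≤ 1) ∧
        ∀ v : V, ∑ e ∈ G.edgeFinset with v ∈ e, φ e = 1) ↔
      ∀ I : Finset V, (∀ u ∈ I, ∀ v ∈ I, ¬ G.Adj u v) →
        I.card ≤ (Finset.univ.filter fun v => ∃ u ∈ I, G.Adj v u).card := by
  constructor
  · rintro ⟨φ, hb, hd⟩ I hI
    set N : Finset V := Finset.univ.filter fun v => ∃ u ∈ I, G.Adj v u with hN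
    have key : ∀ e ∈ G.edgeFinset,
        ((I.filter (· ∈ e)).card : ℝ) * φ e ≤ ((N.filter (· ∈ e)).card : ℝ) * φ e := by
      intro e he
      induction e with
      | _ u w =>
        have hadj : G.Adj u w := by
          rwa [SimpleGraph.mem_edgeFinset, SimpleGraph.mem_edgeSet] at he
        have hφ : 0 ≤ φ s(u, w) := (hb _ he).1
        rw [aux_filter_pair, aux_filter_pair]
        by_cases hu : u ∈ I <;> by_cases hw : w ∈ I
        · exact absurd hadj (hI u hu w hw)
        · -- u ∈ I, w ∉ I : I ∩ {u,w} = {u}, w ∈ N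
          have h1 : I ∩ {u, w} = {u} := by
            ext x; simp only [mem_inter, mem_insert, mem_singleton]
            constructor
            · rintro ⟨hx, rfl | rfl⟩ <;> [rfl; exact absurd hx hw]
            · rintro rfl; exact ⟨hu, Or.inl rfl⟩
          have h2 : w ∈ N ∩ {u, w} := by
            refine mem_inter.mpr ⟨?_, by simp⟩
            rw [hN, mem_filter]
            exact ⟨mem_univ _, u, hu, hadj.symm⟩
          have h3 : 1 ≤ (N ∩ {u, w}).card := Finset.card_pos.mpr ⟨w, h2⟩
          rw [h1, Finset.card_singleton, Nat.cast_one]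
          exact mul_le_mul_of_nonneg_right (by exact_mod_cast h3) hφ
        · have h1 : I ∩ {u, w} = {w} := by
            ext x; simp only [mem_inter, mem_insert, mem_singleton]
            constructor
            · rintro ⟨hx, rfl | rfl⟩ <;> [exact absurd hx hu; rfl]
            · rintro rfl; exact ⟨hw, Or.inr rfl⟩
          have h2 : u ∈ N ∩ {u, w} := by
            refine mem_inter.mpr ⟨?_, by simp⟩
            rw [hN, mem_filter]
            exact ⟨mem_univ _, w, hw, hadj⟩
          have h3 : 1 ≤ (N ∩ {u, w}).card := Finset.card_pos.mpr ⟨u, h2⟩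
          rw [h1, Finset.card_singleton, Nat.cast_one]
          exact mul_le_mul_of_nonneg_right (by exact_mod_cast h3) hφ
        · have h1 : I ∩ {u, w} = ∅ := by
            ext x; simp only [mem_inter, mem_insert, mem_singleton, notMem_empty, iff_false]
            rintro ⟨hx, rfl | rfl⟩ <;> [exact hu hx; exact hw hx]
          rw [h1]
          simp only [Finset.card_empty, Nat.cast_zero, zero_mul]
          positivity
    have hIsum : (I.card : ℝ) = ∑ e ∈ G.edgeFinset, ((I.filter (· ∈ e)).card : ℝ) * φ e := by
      rw [← aux_swap]
      rw [Finset.sum_congr rfl fun v _ => hd v, Finset.sum_const, nsmul_eq_mul, mul_one]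
    have hNsum : (N.card : ℝ) = ∑ e ∈ G.edgeFinset, ((N.filter (· ∈ e)).card : ℝ) * φ e := by
      rw [← aux_swap]
      rw [Finset.sum_congr rfl fun v _ => hd v, Finset.sum_const, nsmul_eq_mul, mul_one]
    have : (I.card : ℝ) ≤ (N.card : ℝ) := by
      rw [hIsum, hNsum]; exact Finset.sum_le_sum key
    exact_mod_cast this
  · intro h
    -- Hall condition for neighborFinset
    have hall : ∀ S : Finset V, S.card ≤ (S.biUnion (fun v => G.neighborFinset v)).card := by
      intro S
      set NS := S.biUnion (fun v => G.neighborFinset v) with hNS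
      have hmemNS : ∀ x, x ∈ NS ↔ ∃ u ∈ S, G.Adj u x := by
        intro x; simp [hNS, SimpleGraph.mem_neighborFinset]
      set I := S \ NS with hI
      have hind : ∀ u ∈ I, ∀ v ∈ I, ¬ G.Adj u v := by
        intro u hu v hv hadj
        rw [hI, mem_sdiff] at hu hv
        exact hu.2 ((hmemNS u).mpr ⟨v, hv.1, hadj.symm⟩)
      have hIcard := h I hind
      set NI := Finset.univ.filter fun v => ∃ u ∈ I, G.Adj v u with hNI
      have hsub : NI ⊆ NS := by
        intro x hx
        rw [hNI, mem_filter] at hx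
        obtain ⟨_, u, hu, hadj⟩ := hx
        rw [hI, mem_sdiff] at hu
        exact (hmemNS x).mpr ⟨u, hu.1, hadj.symm⟩
      have hdisj : Disjoint NI (S ∩ NS) := by
        rw [Finset.disjoint_left]
        intro x hx hx2
        rw [hNI, mem_filter] at hx
        obtain ⟨_, u, hu, hadj⟩ := hx
        rw [hI, mem_sdiff] at hu
        exact hu.2 ((hmemNS u).mpr ⟨x, (mem_inter.mp hx2).1, hadj⟩)
      have hsub2 : NI ∪ (S ∩ NS) ⊆ NS := by
        apply Finset.union_subset hsub (Finset.inter_subset_right)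
      calc S.card = I.card + (S ∩ NS).card := by
            rw [hI, Finset.card_sdiff_add_card_inter]
        _ ≤ NI.card + (S ∩ NS).card := by omega
        _ = (NI ∪ (S ∩ NS)).card := (Finset.card_union_of_disjoint hdisj).symm
        _ ≤ NS.card := Finset.card_le_card hsub2
    obtain ⟨f, hfinj, hfmem⟩ :=
      (Finset.all_card_le_biUnion_card_iff_exists_injective (fun v => G.neighborFinset v)).mp hall
    have hfadj : ∀ v, G.Adj v (f v) := fun v =>
      (SimpleGraph.mem_neighborFinset G v (f v)).mp (hfmem v)
    have hfbij : Function.Bijective f := Finite.injective_iff_bijective.mp hfinj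
    set eqv : V ≃ V := Equiv.ofBijective f hfbij with heqv
    have heqvf : ∀ v, eqv v = f v := fun v => rfl
    refine ⟨Sym2.lift ⟨fun u w => ((if f u = w then (1:ℝ) else 0) + (if f w = u then 1 else 0)) / 2,
      fun u w => by simp [add_comm]⟩, ?_, ?_⟩
    · intro e _
      induction e with
      | _ u w =>
        simp only [Sym2.lift_mk]
        constructor <;> split_ifs <;> norm_num
    · intro v
      have hfilt : (G.edgeFinset.filter (v ∈ ·)) = (G.neighborFinset v).image (fun w => s(v, w)) := by
        ext e
        induction e with
        | _ a b =>
          simp only [mem_filter, SimpleGraph.mem_edgeFinset, SimpleGraph.mem_edgeSet,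
            Finset.mem_image, SimpleGraph.mem_neighborFinset, Sym2.mem_iff]
          constructor
          · rintro ⟨hadj, rfl | rfl⟩
            · exact ⟨b, hadj, rfl⟩
            · exact ⟨a, hadj.symm, Sym2.eq_swap⟩
          · rintro ⟨w, hadj, he⟩
            rw [Sym2.eq_iff] at he
            rcases he with ⟨rfl, rfl⟩ | ⟨rfl, rfl⟩
            · exact ⟨hadj, Or.inl rfl⟩
            · exact ⟨hadj.symm, Or.inr rfl⟩
      rw [show (G.edgeFinset.filter fun e => v ∈ e) = (G.edgeFinset.filter (v ∈ ·)) from rfl, hfilt]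
      rw [Finset.sum_image (fun a _ b _ hab => by
        rw [Sym2.eq_iff] at hab
        rcases hab with ⟨_, h⟩ | ⟨h1, h2⟩
        · exact h
        · rw [← h1, ← h2])]
      simp only [Sym2.lift_mk]
      rw [← Finset.sum_div, Finset.sum_add_distrib]
      have h1 : ∑ w ∈ G.neighborFinset v, (if f v = w then (1:ℝ) else 0) = 1 := by
        rw [Finset.sum_ite_eq]
        simp [SimpleGraph.mem_neighborFinset, hfadj v]
      have h2 : ∑ w ∈ G.neighborFinset v, (if f w = v then (1:ℝ) else 0) = 1 := by
        have : ∀ w, (f w = v) ↔ (w = eqv.symm v) := by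
          intro w
          rw [← heqvf, ← Equiv.eq_symm_apply]
        simp_rw [this]
        rw [Finset.sum_ite_eq']
        have hmem : eqv.symm v ∈ G.neighborFinset v := by
          rw [SimpleGraph.mem_neighborFinset]
          have := hfadj (eqv.symm v)
          rw [← heqvf, Equiv.apply_symm_apply] at this
          exact this.symm
        simp [hmem]
      rw [h1, h2]; norm_num
end

section
/- Let r ≥ 2, let ε ∈ (0,1/2), let λ > 2r³, and let H be a subhypergraph of K_{n×r} satisfying conditions (i) and (ii) below. Then the only balanced assignment for H is the identically zero function. -/
open Finset

/-- An edge of the complete `r`-partite `r`-graph `K_{n×r}` on `V = Fin r × Fin n`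
(part `V_i = {i} × Fin n`): an `r`-set with exactly one vertex in each part. -/
def PartiteEdge {r n : ℕ} (e : Finset (Fin r × Fin n)) : Prop :=
  ∃ f : Fin r → Fin n, e = Finset.univ.image fun i => (i, f i)

/-- A balanced assignment for `H ⊆ K_{n×r}`: sums to `0` on each part and is
nonnegative on every edge of `H`. -/
def IsBalancedAssignment {r n : ℕ} (H : Finset (Finset (Fin r × Fin n)))
    (w : Fin r × Fin n → ℝ) : Prop :=
  (∀ i : Fin r, ∑ x : Fin n, w (i, x) = 0) ∧ ∀ e ∈ H, 0 ≤ ∑ v ∈ e, w v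

namespace Stmt6Aux

open scoped Classical

variable {r n : ℕ}

/-- The set of vertices in part `j` with weight at least `u`. -/
noncomputable def pset (w : Fin r × Fin n → ℝ) (j : Fin r) (u : ℝ) : Finset (Fin n) :=
  univ.filter fun x => u ≤ w (j, x)

/-- The set of vertices in part `i` with weight at most `-s`. -/
noncomputable def nset (w : Fin r × Fin n → ℝ) (i : Fin r) (s : ℝ) : Finset (Fin n) :=
  univ.filter fun x => w (i, x) ≤ -s

/-- Negative vertices whose own sublevel set is large. -/
noncomputable def badset (ε : ℝ) (w : Fin r × Fin n → ℝ) (i : Fin r) : Finset (Fin n) :=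
  univ.filter fun x => w (i, x) < 0 ∧ ε * n < ((nset w i (-(w (i, x)))).card : ℝ)

/-- Maximum magnitude of a bad vertex (0 if none). -/
noncomputable def cstar (ε : ℝ) (w : Fin r × Fin n → ℝ) (i : Fin r) : ℝ :=
  (insert (0:ℝ) ((badset ε w i).image fun x => -(w (i, x)))).max' (insert_nonempty _ _)

/-- The "deep" negative vertices, deeper than any bad vertex. -/
noncomputable def tset (ε : ℝ) (w : Fin r × Fin n → ℝ) (i : Fin r) : Finset (Fin n) :=
  univ.filter fun x => cstar ε w i < -(w (i, x))

variable {ε lam : ℝ} {w : Fin r × Fin n → ℝ} {i : Fin r} {x : Fin n}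

lemma cstar_nonneg : 0 ≤ cstar ε w i := le_max' _ _ (mem_insert_self _ _)

lemma le_cstar (hx : x ∈ badset ε w i) : -(w (i, x)) ≤ cstar ε w i :=
  le_max' _ _ (mem_insert_of_mem (mem_image_of_mem (fun x => -(w (i, x))) hx))

lemma cstar_cases : cstar ε w i = 0 ∨ ∃ x ∈ badset ε w i, cstar ε w i = -(w (i, x)) := by
  have h := max'_mem (insert (0:ℝ) ((badset ε w i).image fun x => -(w (i, x))))
    (insert_nonempty _ _)
  rcases mem_insert.1 h with h0 | h1
  · exact Or.inl h0
  · obtain ⟨x, hx, hxe⟩ := mem_image.1 h1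
    exact Or.inr ⟨x, hx, hxe.symm⟩

lemma cstar_empty (h : badset ε w i = ∅) : cstar ε w i = 0 := by
  rcases cstar_cases (ε := ε) (w := w) (i := i) with h0 | ⟨x, hx, _⟩
  · exact h0
  · rw [h] at hx; exact absurd hx (notMem_empty x)

lemma tset_card (hε0 : 0 < ε) : ((tset ε w i).card : ℝ) ≤ ε * n := by
  by_contra hlt
  push_neg at hlt
  have hεn : (0:ℝ) ≤ ε * n := mul_nonneg hε0.le (Nat.cast_nonneg n)
  have hne : (tset ε w i).Nonempty := by
    rw [← card_pos]
    exact_mod_cast lt_of_le_of_lt hεn hlt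
  obtain ⟨x₀, hx₀, hmin⟩ := Finset.exists_min_image (tset ε w i) (fun x => -(w (i, x))) hne
  have hx₀t := (mem_filter.1 hx₀).2
  have hsub : tset ε w i ⊆ nset w i (-(w (i, x₀))) := by
    intro y hy
    have := hmin y hy
    simp only [nset, mem_filter, mem_univ, true_and]
    linarith
  have hbad : x₀ ∈ badset ε w i := by
    simp only [badset, mem_filter, mem_univ, true_and]
    constructor
    · nlinarith [cstar_nonneg (ε := ε) (w := w) (i := i)]
    · exact lt_of_lt_of_le (lt_of_lt_of_le hlt (by exact_mod_cast card_le_card hsub)) le_rfl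
  have := le_cstar hbad
  linarith

lemma core (hr : 2 ≤ r) {H : Finset (Finset (Fin r × Fin n))}
    (hH : ∀ e ∈ H, PartiteEdge e) (hw2 : ∀ e ∈ H, 0 ≤ ∑ v ∈ e, w v)
    (i : Fin r) (s : ℝ) (T : Finset (Fin n)) (hT : ∀ t ∈ T, w (i, t) ≤ -s)
    (h : ∃ e ∈ H, (∃ t ∈ T, (i, t) ∈ e) ∧
      ∀ j : Fin r, j ≠ i → ∀ u ∈ pset w j (s / ((r : ℝ) - 1)), (j, u) ∉ e) : False := by
  obtain ⟨e, heH, ⟨t, htT, hte⟩, hav⟩ := h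
  obtain ⟨f, rfl⟩ := hH e heH
  have hr2 : (2:ℝ) ≤ (r:ℝ) := by exact_mod_cast hr
  have hρ : (0:ℝ) < (r:ℝ) - 1 := by linarith
  have hsum := hw2 _ heH
  rw [Finset.sum_image (fun a _ b _ hab => congrArg Prod.fst hab)] at hsum
  have hfi : f i = t := by
    obtain ⟨i', _, h'⟩ := Finset.mem_image.1 hte
    have h1 : i' = i := congrArg Prod.fst h'
    have h2 : f i' = t := congrArg Prod.snd h'
    rw [← h1]; exact h2
  have h1 : w (i, f i) ≤ -s := by rw [hfi]; exact hT t htT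
  have hne : (univ.erase i).Nonempty := by
    obtain ⟨j, hj⟩ := Fintype.exists_ne_of_one_lt_card
      (by rw [Fintype.card_fin]; omega : 1 < Fintype.card (Fin r)) i
    exact ⟨j, mem_erase.2 ⟨hj, mem_univ j⟩⟩
  have h2 : ∀ j ∈ univ.erase i, w (j, f j) < s / ((r : ℝ) - 1) := by
    intro j hj
    by_contra hc
    push_neg at hc
    exact hav j (mem_erase.1 hj).1 (f j)
      (by simp only [pset, mem_filter, mem_univ, true_and]; exact hc)
      (mem_image_of_mem _ (mem_univ j))
  have hlt : ∑ j ∈ univ.erase i, w (j, f j) < ∑ _j ∈ univ.erase i, s / ((r : ℝ) - 1) :=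
    Finset.sum_lt_sum_of_nonempty hne h2
  have hcount : ((univ.erase i).card : ℝ) = (r : ℝ) - 1 := by
    rw [card_erase_of_mem (mem_univ i), card_univ, Fintype.card_fin]
    have : 1 ≤ r := by omega
    push_cast [Nat.cast_sub this]
    ring
  rw [Finset.sum_const, nsmul_eq_mul, hcount] at hlt
  have hs : ((r : ℝ) - 1) * (s / ((r : ℝ) - 1)) = s := by field_simp
  rw [hs] at hlt
  have htot := Finset.sum_erase_add univ (fun j => w (j, f j)) (mem_univ i)
  linarith

lemma auxA (hr : 2 ≤ r) {H : Finset (Finset (Fin r × Fin n))}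
    (hH : ∀ e ∈ H, PartiteEdge e) (hw2 : ∀ e ∈ H, 0 ≤ ∑ v ∈ e, w v)
    (hi : ∀ i : Fin r, ∀ T : Finset (Fin n), T.Nonempty → (T.card : ℝ) ≤ ε * n →
      ∀ U : Fin r → Finset (Fin n), (∀ j : Fin r, j ≠ i → ((U j).card : ℝ) ≤ lam * T.card) →
      ∃ e ∈ H, (∃ t ∈ T, (i, t) ∈ e) ∧ ∀ j : Fin r, j ≠ i → ∀ u ∈ U j, (j, u) ∉ e)
    (i : Fin r) (s : ℝ) (T : Finset (Fin n)) (hne : T.Nonempty)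
    (hcard : (T.card : ℝ) ≤ ε * n) (hT : ∀ t ∈ T, w (i, t) ≤ -s) :
    ∃ j, j ≠ i ∧ lam * T.card < ((pset w j (s / ((r : ℝ) - 1))).card : ℝ) := by
  by_contra hcon
  push_neg at hcon
  exact core hr hH hw2 i s T hT
    (hi i T hne hcard (fun j => pset w j (s / ((r : ℝ) - 1))) (fun j hj => hcon j hj))

lemma auxB (hr : 2 ≤ r) {H : Finset (Finset (Fin r × Fin n))}
    (hH : ∀ e ∈ H, PartiteEdge e) (hw2 : ∀ e ∈ H, 0 ≤ ∑ v ∈ e, w v)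
    (hii : ∀ i : Fin r, ∀ T : Finset (Fin n), ε * n ≤ (T.card : ℝ) →
      ∀ U : Fin r → Finset (Fin n), (∀ j : Fin r, j ≠ i → ((U j).card : ℝ) ≤ (1 - ε) * n) →
      ∃ e ∈ H, (∃ t ∈ T, (i, t) ∈ e) ∧ ∀ j : Fin r, j ≠ i → ∀ u ∈ U j, (j, u) ∉ e)
    (i : Fin r) (s : ℝ) (hcard : ε * n ≤ ((nset w i s).card : ℝ)) :
    ∃ j, j ≠ i ∧ (1 - ε) * n < ((pset w j (s / ((r : ℝ) - 1))).card : ℝ) := by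
  by_contra hcon
  push_neg at hcon
  refine core hr hH hw2 i s (nset w i s) ?_
    (hii i (nset w i s) hcard (fun j => pset w j (s / ((r : ℝ) - 1))) (fun j hj => hcon j hj))
  intro t ht
  exact (mem_filter.1 ht).2

lemma perj (hr : 2 ≤ r) (j : Fin r) (b s₀ : ℝ) (hb : 0 ≤ b) (hbs : b ≤ s₀) :
    ((pset w j (s₀ / ((r : ℝ) - 1))).card : ℝ) * (s₀ - b)
      + ((r : ℝ) - 1) * ∑ y : Fin n, max (w (j, y) - s₀ / ((r : ℝ) - 1)) 0
    ≤ ((r : ℝ) - 1) * ∑ y : Fin n, max (w (j, y) - b / ((r : ℝ) - 1)) 0 := by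
  have hr2 : (2:ℝ) ≤ (r:ℝ) := by exact_mod_cast hr
  have hρ : (0:ℝ) < (r:ℝ) - 1 := by linarith
  have hdiv : b / ((r : ℝ) - 1) ≤ s₀ / ((r : ℝ) - 1) := by
    gcongr
  have hcard : ((pset w j (s₀ / ((r : ℝ) - 1))).card : ℝ) * (s₀ - b)
      = ∑ y : Fin n, (if s₀ / ((r : ℝ) - 1) ≤ w (j, y) then s₀ - b else 0) := by
    rw [← Finset.sum_filter]
    rw [Finset.sum_const, nsmul_eq_mul]
    rfl
  rw [hcard, Finset.mul_sum, Finset.mul_sum, ← Finset.sum_add_distrib]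
  apply Finset.sum_le_sum
  intro y _
  by_cases hy : s₀ / ((r : ℝ) - 1) ≤ w (j, y)
  · rw [if_pos hy]
    have e1 : max (w (j, y) - s₀ / ((r : ℝ) - 1)) 0 = w (j, y) - s₀ / ((r : ℝ) - 1) :=
      max_eq_left (by linarith)
    have e2 : max (w (j, y) - b / ((r : ℝ) - 1)) 0 = w (j, y) - b / ((r : ℝ) - 1) :=
      max_eq_left (by linarith)
    rw [e1, e2, mul_sub, mul_sub]
    have hc1 : ((r : ℝ) - 1) * (s₀ / ((r : ℝ) - 1)) = s₀ := by field_simp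
    have hc2 : ((r : ℝ) - 1) * (b / ((r : ℝ) - 1)) = b := by field_simp
    rw [hc1, hc2]
    linarith
  · rw [if_neg hy, zero_add]
    apply mul_le_mul_of_nonneg_left _ hρ.le
    exact max_le_max (by linarith) le_rfl

lemma key (hr : 2 ≤ r) (hε0 : 0 < ε) (hlam0 : 0 < lam)
    {H : Finset (Finset (Fin r × Fin n))}
    (hH : ∀ e ∈ H, PartiteEdge e) (hw2 : ∀ e ∈ H, 0 ≤ ∑ v ∈ e, w v)
    (hi : ∀ i : Fin r, ∀ T : Finset (Fin n), T.Nonempty → (T.card : ℝ) ≤ ε * n →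
      ∀ U : Fin r → Finset (Fin n), (∀ j : Fin r, j ≠ i → ((U j).card : ℝ) ≤ lam * T.card) →
      ∃ e ∈ H, (∃ t ∈ T, (i, t) ∈ e) ∧ ∀ j : Fin r, j ≠ i → ∀ u ∈ U j, (j, u) ∉ e)
    (i : Fin r) (S : Finset (Fin n)) :
    S ⊆ tset ε w i → ∀ b : ℝ, 0 ≤ b → (∀ x ∈ S, b ≤ -(w (i, x))) →
    lam * ∑ x ∈ S, (-(w (i, x)) - b)
      ≤ ((r : ℝ) - 1) * ∑ j ∈ univ.erase i, ∑ y : Fin n, max (w (j, y) - b / ((r : ℝ) - 1)) 0 := by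
  have hr2 : (2:ℝ) ≤ (r:ℝ) := by exact_mod_cast hr
  have hρ : (0:ℝ) < (r:ℝ) - 1 := by linarith
  induction S using Finset.strongInduction with
  | _ S ih =>
    intro hsub b hb hbS
    rcases S.eq_empty_or_nonempty with rfl | hne
    · simp only [Finset.sum_empty, mul_zero]
      apply mul_nonneg hρ.le
      exact Finset.sum_nonneg fun j _ => Finset.sum_nonneg fun y _ => le_max_right _ _
    · obtain ⟨x₀, hx₀S, hmin⟩ := Finset.exists_min_image S (fun x => -(w (i, x))) hne
      set s₀ : ℝ := -(w (i, x₀)) with hs₀def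
      have hs₀b : b ≤ s₀ := hbS x₀ hx₀S
      have hs₀0 : 0 ≤ s₀ := le_trans hb hs₀b
      -- the superlevel set T
      set T : Finset (Fin n) := (tset ε w i).filter (fun x => s₀ ≤ -(w (i, x))) with hTdef
      have hTsub : T ⊆ tset ε w i := Finset.filter_subset _ _
      have hTcard : (T.card : ℝ) ≤ ε * n :=
        le_trans (by exact_mod_cast card_le_card hTsub) (tset_card hε0)
      have hTne : T.Nonempty := ⟨x₀, Finset.mem_filter.2 ⟨hsub hx₀S, le_rfl⟩⟩
      have hST : S ⊆ T := by
        intro x hx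
        exact Finset.mem_filter.2 ⟨hsub hx, hmin x hx⟩
      have hT : ∀ t ∈ T, w (i, t) ≤ -s₀ := by
        intro t ht
        have := (Finset.mem_filter.1 ht).2
        linarith
      obtain ⟨j₁, hj₁, hj₁lt⟩ := auxA hr hH hw2 hi i s₀ T hTne hTcard hT
      have hcards : lam * (T.card : ℝ)
          ≤ ∑ j ∈ univ.erase i, ((pset w j (s₀ / ((r : ℝ) - 1))).card : ℝ) := by
        refine le_trans hj₁lt.le ?_
        exact Finset.single_le_sum
          (f := fun j => ((pset w j (s₀ / ((r : ℝ) - 1))).card : ℝ))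
          (fun j _ => by positivity) (Finset.mem_erase.2 ⟨hj₁, Finset.mem_univ j₁⟩)
      have hScard : (S.card : ℝ) ≤ (T.card : ℝ) := by exact_mod_cast card_le_card hST
      -- induction hypothesis on S \ {x₀}
      have hIH := ih (S.erase x₀) (Finset.erase_ssubset hx₀S)
        ((Finset.erase_subset _ _).trans hsub) s₀ hs₀0
        (fun x hx => hmin x (Finset.mem_of_mem_erase hx))
      -- algebraic decomposition
      have hdecomp : ∑ x ∈ S, (-(w (i, x)) - b)
          = (∑ x ∈ S.erase x₀, (-(w (i, x)) - s₀)) + (S.card : ℝ) * (s₀ - b) := by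
        have h1 : ∑ x ∈ S, (-(w (i, x)) - b)
            = ∑ x ∈ S, ((-(w (i, x)) - s₀) + (s₀ - b)) := by
          apply Finset.sum_congr rfl
          intro x _
          ring
        rw [h1, Finset.sum_add_distrib, Finset.sum_const, nsmul_eq_mul]
        congr 1
        rw [Finset.sum_erase S (by simp [hs₀def] : -(w (i, x₀)) - s₀ = 0)]
      rw [hdecomp, mul_add]
      have step1 : lam * ((S.card : ℝ) * (s₀ - b))
          ≤ (∑ j ∈ univ.erase i, ((pset w j (s₀ / ((r : ℝ) - 1))).card : ℝ)) * (s₀ - b) := by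
        rw [← mul_assoc]
        apply mul_le_mul_of_nonneg_right _ (by linarith)
        exact le_trans (mul_le_mul_of_nonneg_left hScard hlam0.le) hcards
      have step2 : (∑ j ∈ univ.erase i, ((pset w j (s₀ / ((r : ℝ) - 1))).card : ℝ)) * (s₀ - b)
            + ((r : ℝ) - 1) * ∑ j ∈ univ.erase i, ∑ y : Fin n,
                max (w (j, y) - s₀ / ((r : ℝ) - 1)) 0
          ≤ ((r : ℝ) - 1) * ∑ j ∈ univ.erase i, ∑ y : Fin n,
                max (w (j, y) - b / ((r : ℝ) - 1)) 0 := by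
        rw [Finset.sum_mul, Finset.mul_sum, Finset.mul_sum, ← Finset.sum_add_distrib]
        apply Finset.sum_le_sum
        intro j _
        exact perj hr j b s₀ hb hs₀b
      linarith

end Stmt6Aux

set_option maxHeartbeats 2000000 in
/-- If `r ≥ 2`, `ε ∈ (0,1/2)`, `λ > 2r³` and `H ⊆ K_{n×r}` satisfies the
expansion conditions (i) and (ii), then the only balanced assignment for `H` is `0`. -/
theorem stmt6 (r n : ℕ) (hr : 2 ≤ r) (ε lam : ℝ) (hε0 : 0 < ε) (hε : ε < 1 / 2)
    (hlam : 2 * (r : ℝ) ^ 3 < lam)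
    (H : Finset (Finset (Fin r × Fin n))) (hH : ∀ e ∈ H, PartiteEdge e)
    (hi : ∀ i : Fin r, ∀ T : Finset (Fin n), T.Nonempty → (T.card : ℝ) ≤ ε * n →
      ∀ U : Fin r → Finset (Fin n), (∀ j : Fin r, j ≠ i → ((U j).card : ℝ) ≤ lam * T.card) →
      ∃ e ∈ H, (∃ t ∈ T, (i, t) ∈ e) ∧ ∀ j : Fin r, j ≠ i → ∀ u ∈ U j, (j, u) ∉ e)
    (hii : ∀ i : Fin r, ∀ T : Finset (Fin n), ε * n ≤ (T.card : ℝ) →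
      ∀ U : Fin r → Finset (Fin n), (∀ j : Fin r, j ≠ i → ((U j).card : ℝ) ≤ (1 - ε) * n) →
      ∃ e ∈ H, (∃ t ∈ T, (i, t) ∈ e) ∧ ∀ j : Fin r, j ≠ i → ∀ u ∈ U j, (j, u) ∉ e) :
    ∀ w : Fin r × Fin n → ℝ, IsBalancedAssignment H w → w = 0 := by
  classical
  intro w hw
  obtain ⟨hw1, hw2⟩ := hw
  have hr2 : (2:ℝ) ≤ (r:ℝ) := by exact_mod_cast hr
  have hρ : (0:ℝ) < (r:ℝ) - 1 := by linarith
  have hlam0 : 0 < lam := by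
    have h8 : (8:ℝ) ≤ (r:ℝ) ^ 3 := by
      have := pow_le_pow_left₀ (by norm_num : (0:ℝ) ≤ 2) hr2 3
      norm_num at this
      linarith
    linarith
  have hn0 : (0:ℝ) ≤ (n:ℝ) := Nat.cast_nonneg n
  open Stmt6Aux in
  -- pos mass equals neg mass on each part
  have posneg : ∀ i : Fin r,
      (∑ y : Fin n, max (w (i, y)) 0) = ∑ y : Fin n, max (-(w (i, y))) 0 := by
    intro i
    have h0 := hw1 i
    have hpt : ∀ y : Fin n, max (w (i, y)) 0 - max (-(w (i, y))) 0 = w (i, y) := by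
      intro y
      rcases le_total (w (i, y)) 0 with h | h
      · rw [max_eq_right h, max_eq_left (by linarith)]; ring
      · rw [max_eq_left h, max_eq_right (by linarith)]; ring
    have : ∑ y : Fin n, (max (w (i, y)) 0 - max (-(w (i, y))) 0) = 0 := by
      rw [Finset.sum_congr rfl (fun y _ => hpt y)]; exact h0
    rw [Finset.sum_sub_distrib] at this
    linarith
  have hposnn : ∀ j : Fin r, 0 ≤ ∑ y : Fin n, max (w (j, y)) 0 :=
    fun j => Finset.sum_nonneg fun y _ => le_max_right _ _
  set P : ℝ := ∑ j : Fin r, ∑ y : Fin n, max (w (j, y)) 0 with hPdef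
  have hPnn : 0 ≤ P := Finset.sum_nonneg fun j _ => hposnn j
  have hsub_erase : ∀ i : Fin r,
      (∑ j ∈ univ.erase i, ∑ y : Fin n, max (w (j, y)) 0) ≤ P := by
    intro i
    exact Finset.sum_le_sum_of_subset_of_nonneg (Finset.subset_univ _)
      (fun j _ _ => hposnn j)
  -- bound on the deep part
  have Dbound : ∀ i : Fin r,
      lam * ∑ x ∈ Stmt6Aux.tset ε w i, -(w (i, x))
        ≤ ((r : ℝ) - 1) * ∑ j ∈ univ.erase i, ∑ y : Fin n, max (w (j, y)) 0 := by
    intro i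
    have hk := Stmt6Aux.key hr hε0 hlam0 hH hw2 hi i (Stmt6Aux.tset ε w i)
      Finset.Subset.rfl 0 le_rfl
      (fun x hx => by
        have := (Finset.mem_filter.1 hx).2
        have := Stmt6Aux.cstar_nonneg (ε := ε) (w := w) (i := i)
        linarith)
    simpa [sub_zero, zero_div] using hk
  have Dbound' : ∀ i : Fin r,
      lam * ∑ x ∈ Stmt6Aux.tset ε w i, -(w (i, x)) ≤ ((r : ℝ) - 1) * P := by
    intro i
    exact le_trans (Dbound i) (mul_le_mul_of_nonneg_left (hsub_erase i) hρ.le)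
  -- decomposition of negative mass
  have negdecomp : ∀ i : Fin r,
      (∑ y : Fin n, max (-(w (i, y))) 0)
        ≤ (n : ℝ) * Stmt6Aux.cstar ε w i + ∑ x ∈ Stmt6Aux.tset ε w i, -(w (i, x)) := by
    intro i
    have hcnn := Stmt6Aux.cstar_nonneg (ε := ε) (w := w) (i := i)
    rw [← Finset.sum_filter_add_sum_filter_not Finset.univ
      (fun x => Stmt6Aux.cstar ε w i < -(w (i, x))) (fun y => max (-(w (i, y))) 0)]
    have hA : ∑ x ∈ Finset.univ.filter (fun x => Stmt6Aux.cstar ε w i < -(w (i, x))),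
        max (-(w (i, x))) 0 = ∑ x ∈ Stmt6Aux.tset ε w i, -(w (i, x)) := by
      apply Finset.sum_congr rfl
      intro x hx
      have := (Finset.mem_filter.1 hx).2
      exact max_eq_left (by linarith)
    have hB : ∑ x ∈ Finset.univ.filter (fun x => ¬ (Stmt6Aux.cstar ε w i < -(w (i, x)))),
        max (-(w (i, x))) 0 ≤ (n : ℝ) * Stmt6Aux.cstar ε w i := by
      have h1 : ∀ x ∈ Finset.univ.filter (fun x => ¬ (Stmt6Aux.cstar ε w i < -(w (i, x)))),
          max (-(w (i, x))) 0 ≤ Stmt6Aux.cstar ε w i := by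
        intro x hx
        have := (Finset.mem_filter.1 hx).2
        push_neg at this
        exact max_le this hcnn
      calc ∑ x ∈ Finset.univ.filter (fun x => ¬ (Stmt6Aux.cstar ε w i < -(w (i, x)))),
            max (-(w (i, x))) 0
          ≤ (Finset.univ.filter
              (fun x => ¬ (Stmt6Aux.cstar ε w i < -(w (i, x))))).card • Stmt6Aux.cstar ε w i :=
            Finset.sum_le_card_nsmul _ _ _ h1
        _ ≤ (n : ℝ) * Stmt6Aux.cstar ε w i := by
            rw [nsmul_eq_mul]
            apply mul_le_mul_of_nonneg_right _ hcnn
            have : (Finset.univ.filter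
                (fun x => ¬ (Stmt6Aux.cstar ε w i < -(w (i, x))))).card ≤ n := by
              apply le_trans (Finset.card_le_univ _)
              simp
            exact_mod_cast this
    rw [hA]
    linarith
  -- bound on the shallow part (via condition (ii))
  have bigbound : ∀ i : Fin r,
      lam * ((n : ℝ) * Stmt6Aux.cstar ε w i) ≤ 2 * ((r : ℝ) - 1) ^ 2 * P := by
    intro i
    rcases Stmt6Aux.cstar_cases (ε := ε) (w := w) (i := i) with h0 | ⟨xs, hxs, hcx⟩
    · rw [h0, mul_zero, mul_zero]
      positivity
    · have hxsbad := (Finset.mem_filter.1 hxs).2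
      have hcpos : 0 < Stmt6Aux.cstar ε w i := by rw [hcx]; linarith [hxsbad.1]
      have hcard : ε * n ≤ ((Stmt6Aux.nset w i (Stmt6Aux.cstar ε w i)).card : ℝ) := by
        rw [hcx]; exact hxsbad.2.le
      obtain ⟨j, hji, hjcard⟩ := Stmt6Aux.auxB hr hH hw2 hii i (Stmt6Aux.cstar ε w i) hcard
      set c : ℝ := Stmt6Aux.cstar ε w i
      set u : ℝ := c / ((r : ℝ) - 1) with hudef
      have hu0 : 0 < u := div_pos hcpos hρ
      -- positive mass of part j is large
      have hpos_j : ((Stmt6Aux.pset w j u).card : ℝ) * u ≤ ∑ y : Fin n, max (w (j, y)) 0 := by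
        calc ((Stmt6Aux.pset w j u).card : ℝ) * u = ∑ y ∈ Stmt6Aux.pset w j u, u := by
              rw [Finset.sum_const, nsmul_eq_mul]
          _ ≤ ∑ y ∈ Stmt6Aux.pset w j u, max (w (j, y)) 0 := by
              apply Finset.sum_le_sum
              intro y hy
              have := (Finset.mem_filter.1 hy).2
              exact le_trans this (le_max_left _ _)
          _ ≤ ∑ y : Fin n, max (w (j, y)) 0 := by
              apply Finset.sum_le_sum_of_subset_of_nonneg (Finset.subset_univ _)
              intro y _ _
              exact le_max_right _ _
      have hnc : (n : ℝ) * c ≤ 2 * ((r : ℝ) - 1) * ∑ y : Fin n, max (w (j, y)) 0 := by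
        have h1 : (1 - ε) * n * u ≤ ((Stmt6Aux.pset w j u).card : ℝ) * u :=
          mul_le_mul_of_nonneg_right hjcard.le hu0.le
        have h2 : ((r : ℝ) - 1) * u = c := by rw [hudef]; field_simp
        have e1 : (n : ℝ) * c = ((r : ℝ) - 1) * ((n : ℝ) * u) := by rw [← h2]; ring
        have key1 : 2 * ((r : ℝ) - 1) * ((1 - ε) * n * u)
            ≤ 2 * ((r : ℝ) - 1) * ∑ y : Fin n, max (w (j, y)) 0 :=
          mul_le_mul_of_nonneg_left (le_trans h1 hpos_j) (by linarith)
        have key2 : 0 ≤ ((r : ℝ) - 1) * ((1 - 2 * ε) * ((n : ℝ) * u)) :=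
          mul_nonneg hρ.le (mul_nonneg (by linarith) (mul_nonneg hn0 hu0.le))
        nlinarith [key1, key2, e1]
      -- part j has no bad vertices
      have hbad_j : Stmt6Aux.badset ε w j = ∅ := by
        by_contra hne
        obtain ⟨z, hz⟩ := Finset.nonempty_iff_ne_empty.2 hne
        have hzbad := (Finset.mem_filter.1 hz).2
        have hdisj : Disjoint (Stmt6Aux.nset w j (-(w (j, z)))) (Stmt6Aux.pset w j u) := by
          rw [Finset.disjoint_left]
          intro y hy1 hy2
          have h1 := (Finset.mem_filter.1 hy1).2
          have h2 := (Finset.mem_filter.1 hy2).2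
          have := hzbad.1
          linarith
        have hcards := Finset.card_union_of_disjoint hdisj
        have hle : (Stmt6Aux.nset w j (-(w (j, z))) ∪ Stmt6Aux.pset w j u).card ≤ n := by
          apply le_trans (Finset.card_le_univ _)
          simp
        have : ((Stmt6Aux.nset w j (-(w (j, z)))).card : ℝ)
            + ((Stmt6Aux.pset w j u).card : ℝ) ≤ n := by
          rw [← Nat.cast_add, ← hcards]
          exact_mod_cast hle
        have := hzbad.2
        nlinarith
      have hcj : Stmt6Aux.cstar ε w j = 0 := Stmt6Aux.cstar_empty hbad_j
      -- part j's positive mass is controlled by λ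
      have hposj_small : lam * ∑ y : Fin n, max (w (j, y)) 0 ≤ ((r : ℝ) - 1) * P := by
        have h1 : ∑ y : Fin n, max (w (j, y)) 0 ≤ ∑ x ∈ Stmt6Aux.tset ε w j, -(w (j, x)) := by
          have := negdecomp j
          rw [posneg j]
          rw [hcj] at this
          linarith
        exact le_trans (mul_le_mul_of_nonneg_left h1 hlam0.le) (Dbound' j)
      -- combine
      have t1 : lam * ((n : ℝ) * c)
          ≤ lam * (2 * ((r : ℝ) - 1) * ∑ y : Fin n, max (w (j, y)) 0) :=
        mul_le_mul_of_nonneg_left hnc hlam0.le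
      have t2 : lam * (2 * ((r : ℝ) - 1) * ∑ y : Fin n, max (w (j, y)) 0)
          = 2 * ((r : ℝ) - 1) * (lam * ∑ y : Fin n, max (w (j, y)) 0) := by ring
      have t3 : 2 * ((r : ℝ) - 1) * (lam * ∑ y : Fin n, max (w (j, y)) 0)
          ≤ 2 * ((r : ℝ) - 1) * (((r : ℝ) - 1) * P) :=
        mul_le_mul_of_nonneg_left hposj_small (by linarith)
      calc lam * ((n : ℝ) * c) ≤ 2 * ((r : ℝ) - 1) * (((r : ℝ) - 1) * P) := by linarith
        _ = 2 * ((r : ℝ) - 1) ^ 2 * P := by ring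
  -- final accounting
  have hfinal : lam * P ≤ (2 * (r : ℝ) + 1) * ((r : ℝ) - 1) ^ 2 * P := by
    have h1 : P = ∑ i : Fin r, ∑ y : Fin n, max (-(w (i, y))) 0 := by
      rw [hPdef]
      exact Finset.sum_congr rfl fun i _ => posneg i
    have h2 : lam * P ≤ ∑ i : Fin r,
        (lam * ((n : ℝ) * Stmt6Aux.cstar ε w i)
          + lam * ∑ x ∈ Stmt6Aux.tset ε w i, -(w (i, x))) := by
      rw [h1, Finset.mul_sum]
      apply Finset.sum_le_sum
      intro i _
      have := negdecomp i
      nlinarith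
    have h3 : ∑ i : Fin r,
        (lam * ((n : ℝ) * Stmt6Aux.cstar ε w i)
          + lam * ∑ x ∈ Stmt6Aux.tset ε w i, -(w (i, x)))
        ≤ ∑ i : Fin r, (2 * ((r : ℝ) - 1) ^ 2 * P
          + ((r : ℝ) - 1) * ∑ j ∈ univ.erase i, ∑ y : Fin n, max (w (j, y)) 0) := by
      apply Finset.sum_le_sum
      intro i _
      exact add_le_add (bigbound i) (Dbound i)
    have h4 : ∑ i : Fin r, (2 * ((r : ℝ) - 1) ^ 2 * P
          + ((r : ℝ) - 1) * ∑ j ∈ univ.erase i, ∑ y : Fin n, max (w (j, y)) 0)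
        = (r : ℝ) * (2 * ((r : ℝ) - 1) ^ 2 * P)
          + ((r : ℝ) - 1) * ∑ i : Fin r, (P - ∑ y : Fin n, max (w (i, y)) 0) := by
      rw [Finset.sum_add_distrib, Finset.sum_const, nsmul_eq_mul, Finset.card_univ,
        Fintype.card_fin, ← Finset.mul_sum]
      congr 2
      apply Finset.sum_congr rfl
      intro i _
      rw [Finset.sum_erase_eq_sub (Finset.mem_univ i)]
    have h5 : ∑ i : Fin r, (P - ∑ y : Fin n, max (w (i, y)) 0) = ((r : ℝ) - 1) * P := by
      rw [Finset.sum_sub_distrib, Finset.sum_const, nsmul_eq_mul, Finset.card_univ,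
        Fintype.card_fin, ← hPdef]
      ring
    have h6 := le_trans h2 h3
    rw [h4, h5] at h6
    have e : (r : ℝ) * (2 * ((r : ℝ) - 1) ^ 2 * P) + ((r : ℝ) - 1) * (((r : ℝ) - 1) * P)
        = (2 * (r : ℝ) + 1) * ((r : ℝ) - 1) ^ 2 * P := by ring
    linarith
  have hcoef : (2 * (r : ℝ) + 1) * ((r : ℝ) - 1) ^ 2 < lam := by
    have h1 : (2 * (r : ℝ) + 1) * ((r : ℝ) - 1) ^ 2
        = 2 * (r : ℝ) ^ 3 - 3 * (r : ℝ) ^ 2 + 1 := by ring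
    have h2 : (4:ℝ) ≤ (r : ℝ) ^ 2 := by
      have h3 : (2:ℝ) * 2 ≤ (r : ℝ) * (r : ℝ) :=
        mul_le_mul hr2 hr2 (by norm_num) (by linarith)
      nlinarith
    linarith
  have hP0 : P = 0 := by
    by_contra hne
    have hPpos : 0 < P := lt_of_le_of_ne hPnn (Ne.symm hne)
    linarith [mul_lt_mul_of_pos_right hcoef hPpos]
  -- conclude w = 0
  have hwnn : ∀ i : Fin r, ∀ y : Fin n, 0 ≤ w (i, y) := by
    intro i y
    have h1 : ∑ i : Fin r, ∑ y : Fin n, max (-(w (i, y))) 0 = 0 := by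
      rw [← Finset.sum_congr rfl fun i _ => posneg i]
      exact hP0
    have h2 : ∑ y : Fin n, max (-(w (i, y))) 0 = 0 :=
      (Finset.sum_eq_zero_iff_of_nonneg fun i _ =>
        Finset.sum_nonneg fun y _ => le_max_right _ _).1 h1 i (Finset.mem_univ i)
    have h3 : max (-(w (i, y))) 0 = 0 :=
      (Finset.sum_eq_zero_iff_of_nonneg fun y _ => le_max_right _ _).1 h2 y (Finset.mem_univ y)
    have := le_max_left (-(w (i, y))) 0
    rw [h3] at this
    linarith
  funext v
  obtain ⟨i, y⟩ := v
  have := (Finset.sum_eq_zero_iff_of_nonneg fun y _ => hwnn i y).1 (hw1 i) y (Finset.mem_univ y)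
  simpa using this
end

section
/- Let r ≥ 2, let ε ∈ (0,1/2), let λ > 0, and let H be a subhypergraph of K_{n×r} satisfying condition (i) below. Let w be a balanced assignment for H, let i ∈ [r], and let X ⊆ (V_i)⁻ with |X| ≤ εn. Then ψ(X) ≤ r·ψ(V⁺)/λ. -/
open Finset
open scoped Classical

/-!
Fix a threshold `τ > 0` and let `T = {x ∈ X : -w(i,x) ≥ τ}`. If fewer than `λ|T|` vertices `v`
had `(r-1)·w(v) ≥ τ`, condition (i) with `U_j` the set of those vertices in `V_j` would give an
edge of `H` through `T` whose other `r - 1` vertices all have weight `< τ/(r-1)`, so its weight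
would be negative. Hence `λ·|{x ∈ X : -w(i,x) ≥ τ}| ≤ |{v : (r-1)·w(v) ≥ τ}|` for every `τ > 0`,
and integrating over `τ` (layer cake) gives `λ·ψ(X) ≤ (r-1)·ψ(V⁺)`.
-/

theorem mul_sum_le_sum_max_zero_of_card_superlevel_le {ι κ : Type*} [DecidableEq ι] {c : ℝ}
    (hc : 0 ≤ c) (s : Finset ι) (t : Finset κ) (a : ι → ℝ) (b : κ → ℝ) (ha : ∀ x ∈ s, 0 ≤ a x)
    (h : ∀ τ > 0, c * #{x ∈ s | τ ≤ a x} ≤ #{v ∈ t | τ ≤ b v}) :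
    c * ∑ x ∈ s, a x ≤ ∑ v ∈ t, max (b v) 0 := by
  induction s using Finset.strongInduction generalizing a b with
  | H s ih =>
    rcases s.eq_empty_or_nonempty with rfl | hs
    · simpa using sum_nonneg fun v _ => le_max_right (b v) 0
    obtain ⟨x₀, hx₀, hmin⟩ := s.exists_min_image a hs
    set m := a x₀
    have hm : 0 ≤ m := ha x₀ hx₀
    -- Peel off the bottom layer, of height `m = min a`, and shift `a` and `b` down by `m`.
    have hrest : c * ∑ x ∈ s.erase x₀, (a x - m) ≤ ∑ v ∈ t, max (b v - m) 0 := by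
      refine ih _ (erase_ssubset hx₀) _ _ (fun x hx => sub_nonneg.2 (hmin x (mem_of_mem_erase hx)))
        fun τ hτ => ?_
      calc c * #{x ∈ s.erase x₀ | τ ≤ a x - m}
          ≤ c * #{x ∈ s | τ + m ≤ a x} := by
            gcongr
            intro x
            simp only [mem_filter, mem_erase]
            exact fun ⟨⟨_, hx⟩, hτx⟩ => ⟨hx, by linarith⟩
        _ ≤ #{v ∈ t | τ + m ≤ b v} := h _ (by linarith)
        _ = #{v ∈ t | τ ≤ b v - m} := by simp only [le_sub_iff_add_le]
    have hbottom : c * #s * m ≤ #{v ∈ t | m ≤ b v} * m := by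
      rcases hm.eq_or_lt with hm0 | hm0
      · simp [← hm0]
      · have := h m hm0
        rw [filter_true_of_mem fun x hx => hmin x hx] at this
        gcongr
    have hsplit : ∑ x ∈ s, a x = #s * m + ∑ x ∈ s.erase x₀, (a x - m) := by
      rw [← add_sum_erase s a hx₀, sum_sub_distrib, sum_const, nsmul_eq_mul,
        ← card_erase_add_one hx₀]
      push_cast
      ring
    have hpointwise : ∀ v ∈ t, max (b v - m) 0 + (if m ≤ b v then m else 0) ≤ max (b v) 0 := by
      intro v _
      split_ifs with hv
      · rw [max_eq_left (sub_nonneg.2 hv), max_eq_left (hm.trans hv)]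
        linarith
      · rw [max_eq_right (by linarith)]
        simp
    calc c * ∑ x ∈ s, a x
        = c * #s * m + c * ∑ x ∈ s.erase x₀, (a x - m) := by rw [hsplit]; ring
      _ ≤ #{v ∈ t | m ≤ b v} * m + ∑ v ∈ t, max (b v - m) 0 := add_le_add hbottom hrest
      _ = ∑ v ∈ t, (max (b v - m) 0 + if m ≤ b v then m else 0) := by
        rw [sum_add_distrib, ← sum_filter, sum_const, nsmul_eq_mul, add_comm]
      _ ≤ ∑ v ∈ t, max (b v) 0 := sum_le_sum hpointwise

theorem PartiteEdge.exists_ne_neg_le_mul {r n : ℕ} (hr : 2 ≤ r) {e : Finset (Fin r × Fin n)}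
    (he : PartiteEdge e) {w : Fin r × Fin n → ℝ} (hw : 0 ≤ ∑ v ∈ e, w v) {i : Fin r} {x : Fin n}
    (hx : (i, x) ∈ e) : ∃ j ≠ i, ∃ y, (j, y) ∈ e ∧ -w (i, x) ≤ (r - 1) * w (j, y) := by
  obtain ⟨f, rfl⟩ := he
  have hfx : f i = x := by
    obtain ⟨j, -, hj⟩ := mem_image.1 hx
    obtain ⟨rfl, rfl⟩ := Prod.mk.inj hj
    rfl
  subst hfx
  have hothers : -w (i, f i) ≤ ∑ j ∈ univ.erase i, w (j, f j) := by
    rw [sum_image fun j _ k _ h => congrArg Prod.fst h, ← add_sum_erase _ _ (mem_univ i)] at hw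
    linarith
  have hcard : (#(univ.erase i) : ℝ) = r - 1 := by
    rw [card_erase_of_mem (mem_univ i), card_univ, Fintype.card_fin,
      Nat.cast_sub (by omega : 1 ≤ r), Nat.cast_one]
  have hne : (univ.erase i).Nonempty := by
    rw [← card_pos, card_erase_of_mem (mem_univ i), card_univ, Fintype.card_fin]
    omega
  have hr1 : (0 : ℝ) ≤ r - 1 := by
    rw [sub_nonneg]
    exact_mod_cast (by omega : 1 ≤ r)
  obtain ⟨j, hj, hle⟩ := exists_le_of_sum_le hne (f := fun _ => -w (i, f i))
    (g := fun j => (r - 1) * w (j, f j)) (by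
      rw [sum_const, nsmul_eq_mul, hcard, ← mul_sum]
      exact mul_le_mul_of_nonneg_left hothers hr1)
  exact ⟨j, ne_of_mem_erase hj, f j, mem_image_of_mem _ (mem_univ j), hle⟩

/-- Condition (i) of the paper; the entry `U i` plays no role. -/
def ExpansionCondition {r n : ℕ} (ε lam : ℝ) (H : Finset (Finset (Fin r × Fin n))) : Prop :=
  ∀ i : Fin r, ∀ T : Finset (Fin n), T.Nonempty → (T.card : ℝ) ≤ ε * n →
    ∀ U : Fin r → Finset (Fin n), (∀ j : Fin r, j ≠ i → ((U j).card : ℝ) ≤ lam * T.card) →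
    ∃ e ∈ H, (∃ t ∈ T, (i, t) ∈ e) ∧ ∀ j : Fin r, j ≠ i → ∀ u ∈ U j, (j, u) ∉ e

theorem ExpansionCondition.mul_card_le_card_superlevel {r n : ℕ} (hr : 2 ≤ r) {ε lam : ℝ}
    {H : Finset (Finset (Fin r × Fin n))} (hexp : ExpansionCondition ε lam H)
    (hH : ∀ e ∈ H, PartiteEdge e) {w : Fin r × Fin n → ℝ} (hw : ∀ e ∈ H, 0 ≤ ∑ v ∈ e, w v)
    {i : Fin r} {T : Finset (Fin n)} (hT : (#T : ℝ) ≤ ε * n) {τ : ℝ}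
    (hτ : ∀ x ∈ T, τ ≤ -w (i, x)) : lam * #T ≤ #{v | τ ≤ (r - 1) * w v} := by
  by_contra! hlt
  have hTne : T.Nonempty := by
    rw [nonempty_iff_ne_empty]
    rintro rfl
    simp only [card_empty, Nat.cast_zero, mul_zero] at hlt
    exact (Nat.cast_nonneg _).not_gt hlt
  set U : Fin r → Finset (Fin n) := fun j => {y | τ ≤ (r - 1) * w (j, y)}
  have hU : ∀ j, j ≠ i → (#(U j) : ℝ) ≤ lam * #T := by
    refine fun j _ => le_trans ?_ hlt.le
    exact_mod_cast card_le_card_of_injOn (Prod.mk j) (fun y hy => by simpa [U] using hy)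
      (Prod.mk_right_injective j).injOn
  obtain ⟨e, he, ⟨x, hxT, hxe⟩, havoid⟩ := hexp i T hTne hT U hU
  obtain ⟨j, hji, y, hye, hle⟩ := (hH e he).exists_ne_neg_le_mul hr (hw e he) hxe
  exact havoid j hji y (by simpa [U] using (hτ x hxT).trans hle) hye

theorem sum_max_zero_eq_sum_filter_abs {κ : Type*} (t : Finset κ) (f : κ → ℝ) :
    ∑ v ∈ t, max (f v) 0 = ∑ v ∈ t with 0 ≤ f v, |f v| := by
  rw [sum_filter]
  refine sum_congr rfl fun v _ => ?_
  split_ifs with hv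
  · rw [max_eq_left hv, abs_of_nonneg hv]
  · exact max_eq_right (not_le.1 hv).le

theorem stmt7_general (r n : ℕ) (hr : 2 ≤ r) (ε lam : ℝ)
    (hlam : 0 < lam)
    (H : Finset (Finset (Fin r × Fin n))) (hH : ∀ e ∈ H, PartiteEdge e)
    (hi : ∀ i : Fin r, ∀ T : Finset (Fin n), T.Nonempty → (T.card : ℝ) ≤ ε * n →
      ∀ U : Fin r → Finset (Fin n), (∀ j : Fin r, j ≠ i → ((U j).card : ℝ) ≤ lam * T.card) →
      ∃ e ∈ H, (∃ t ∈ T, (i, t) ∈ e) ∧ ∀ j : Fin r, j ≠ i → ∀ u ∈ U j, (j, u) ∉ e)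
    (w : Fin r × Fin n → ℝ) (hw : IsBalancedAssignment H w)
    (i : Fin r) (X : Finset (Fin n)) (hXneg : ∀ x ∈ X, w (i, x) < 0)
    (hXcard : (X.card : ℝ) ≤ ε * n) :
    ∑ x ∈ X, |w (i, x)| ≤
      r * (∑ v ∈ Finset.univ.filter (fun v : Fin r × Fin n => 0 ≤ w v), |w v|) / lam := by
  have hsuperlevel : ∀ τ > 0, lam * #{x ∈ X | τ ≤ -w (i, x)} ≤ #{v | τ ≤ (r - 1) * w v} :=
    fun τ _ => ExpansionCondition.mul_card_le_card_superlevel (ε := ε) hr hi hH hw.2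
      (le_trans (by exact_mod_cast card_filter_le _ _) hXcard) fun x hx => (mem_filter.1 hx).2
  have hlayer := mul_sum_le_sum_max_zero_of_card_superlevel_le hlam.le X univ _ _
    (fun x hx => (neg_pos.2 (hXneg x hx)).le) hsuperlevel
  have hψ : 0 ≤ ∑ v with 0 ≤ w v, |w v| := sum_nonneg fun v _ => abs_nonneg _
  have hr1 : (0 : ℝ) ≤ r - 1 := by
    rw [sub_nonneg]
    exact_mod_cast (by omega : 1 ≤ r)
  rw [le_div_iff₀ hlam]
  calc (∑ x ∈ X, |w (i, x)|) * lam
      = lam * ∑ x ∈ X, -w (i, x) := by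
        rw [mul_comm]
        exact congrArg _ (sum_congr rfl fun x hx => abs_of_neg (hXneg x hx))
    _ ≤ ∑ v, max ((r - 1) * w v) 0 := hlayer
    _ = (r - 1) * ∑ v with 0 ≤ w v, |w v| := by
        rw [← sum_max_zero_eq_sum_filter_abs, mul_sum]
        exact sum_congr rfl fun v _ => by rw [mul_max_of_nonneg _ _ hr1, mul_zero]
    _ ≤ r * ∑ v with 0 ≤ w v, |w v| := by linarith

/-- Under condition (i) (with parameters `ε ∈ (0,1/2)`, `λ > 0`), for a
balanced assignment `w`, any `X ⊆ (V_i)⁻` with `|X| ≤ εn` satisfies `ψ(X) ≤ r·ψ(V⁺)/λ`.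
Here `X` is encoded as a finset of `Fin n` (the subset `{(i,x) : x ∈ X}` of part `V_i`). -/
theorem stmt7 (r n : ℕ) (hr : 2 ≤ r) (ε lam : ℝ) (hε0 : 0 < ε) (hε : ε < 1 / 2)
    (hlam : 0 < lam)
    (H : Finset (Finset (Fin r × Fin n))) (hH : ∀ e ∈ H, PartiteEdge e)
    (hi : ∀ i : Fin r, ∀ T : Finset (Fin n), T.Nonempty → (T.card : ℝ) ≤ ε * n →
      ∀ U : Fin r → Finset (Fin n), (∀ j : Fin r, j ≠ i → ((U j).card : ℝ) ≤ lam * T.card) →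
      ∃ e ∈ H, (∃ t ∈ T, (i, t) ∈ e) ∧ ∀ j : Fin r, j ≠ i → ∀ u ∈ U j, (j, u) ∉ e)
    (w : Fin r × Fin n → ℝ) (hw : IsBalancedAssignment H w)
    (i : Fin r) (X : Finset (Fin n)) (hXneg : ∀ x ∈ X, w (i, x) < 0)
    (hXcard : (X.card : ℝ) ≤ ε * n) :
    ∑ x ∈ X, |w (i, x)| ≤
      r * (∑ v ∈ Finset.univ.filter (fun v : Fin r × Fin n => 0 ≤ w v), |w v|) / lam :=
  stmt7_general r n hr ε lam hlam H hH hi w hw i X hXneg hXcard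
end

section
/- Let r ≥ 2, let ε ∈ (0,1/2), and let H be a subhypergraph of K_{n×r} satisfying condition (ii) below. Let w be a balanced assignment for H, let t ≥ 0, and let i ∈ [r] be such that |(V_i)_t| ≥ εn. Then there exists j ≠ i with |(V_j)⁻| ≤ εn and |V_j^{t/(r−1)}| ≥ (1−ε)n. -/
open Finset
open scoped Classical

/-- Under condition (ii) (with parameter `ε ∈ (0,1/2)`), for a balanced
assignment `w`, `t ≥ 0` and `i` with `|(V_i)_t| ≥ εn`, there is `j ≠ i` with
`|(V_j)⁻| ≤ εn` and `|V_j^{t/(r-1)}| ≥ (1-ε)n`. -/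
theorem stmt8 (r n : ℕ) (hr : 2 ≤ r) (ε : ℝ) (hε0 : 0 < ε) (hε : ε < 1 / 2)
    (H : Finset (Finset (Fin r × Fin n))) (hH : ∀ e ∈ H, PartiteEdge e)
    (hii : ∀ i : Fin r, ∀ T : Finset (Fin n), ε * n ≤ (T.card : ℝ) →
      ∀ U : Fin r → Finset (Fin n), (∀ j : Fin r, j ≠ i → ((U j).card : ℝ) ≤ (1 - ε) * n) →
      ∃ e ∈ H, (∃ t ∈ T, (i, t) ∈ e) ∧ ∀ j : Fin r, j ≠ i → ∀ u ∈ U j, (j, u) ∉ e)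
    (w : Fin r × Fin n → ℝ) (hw : IsBalancedAssignment H w)
    (t : ℝ) (ht : 0 ≤ t) (i : Fin r)
    (hbig : ε * n ≤ ((Finset.univ.filter fun x : Fin n => w (i, x) < -t).card : ℝ)) :
    ∃ j : Fin r, j ≠ i ∧
      ((Finset.univ.filter fun x : Fin n => w (j, x) < 0).card : ℝ) ≤ ε * n ∧
      (1 - ε) * n ≤
        ((Finset.univ.filter fun x : Fin n => t / ((r : ℝ) - 1) ≤ w (j, x)).card : ℝ) := by
  by_contra hcon
  push_neg at hcon
  have hr1 : (0:ℝ) < (r:ℝ) - 1 := by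
    have : (2:ℝ) ≤ (r:ℝ) := by exact_mod_cast hr
    linarith
  set U : Fin r → Finset (Fin n) := fun j =>
    if ((Finset.univ.filter fun x : Fin n => w (j, x) < 0).card : ℝ) ≤ ε * n then
      Finset.univ.filter (fun x : Fin n => t / ((r:ℝ) - 1) ≤ w (j, x))
    else Finset.univ.filter (fun x : Fin n => 0 ≤ w (j, x)) with hU
  have hUcard : ∀ j : Fin r, j ≠ i → ((U j).card : ℝ) ≤ (1 - ε) * n := by
    intro j hj
    by_cases hc : ((Finset.univ.filter fun x : Fin n => w (j, x) < 0).card : ℝ) ≤ ε * n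
    · have := hcon j hj hc
      simp only [hU, if_pos hc]
      linarith
    · simp only [hU, if_neg hc]
      push_neg at hc
      have hpart : (Finset.univ.filter fun x : Fin n => w (j,x) < 0).card
          + (Finset.univ.filter fun x : Fin n => ¬ (w (j,x) < 0)).card = n := by
        rw [Finset.card_filter_add_card_filter_not]
        simp
      have heq : (Finset.univ.filter fun x : Fin n => 0 ≤ w (j,x))
          = (Finset.univ.filter fun x : Fin n => ¬ (w (j,x) < 0)) := by
        apply Finset.filter_congr
        intro x _
        simp [not_lt]
      rw [heq]
      have : ((Finset.univ.filter fun x : Fin n => w (j,x) < 0).card : ℝ)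
          + ((Finset.univ.filter fun x : Fin n => ¬ (w (j,x) < 0)).card : ℝ) = n := by
        exact_mod_cast congrArg (Nat.cast : ℕ → ℝ) hpart
      linarith
  obtain ⟨e, he, ⟨t', ht', hmem⟩, havoid⟩ :=
    hii i (Finset.univ.filter fun x : Fin n => w (i, x) < -t) hbig U hUcard
  obtain ⟨f, hef⟩ := hH e he
  have hinj : ∀ a ∈ (Finset.univ : Finset (Fin r)), ∀ b ∈ Finset.univ,
      (fun j => (j, f j)) a = (fun j => (j, f j)) b → a = b := by
    intro a _ b _ h
    exact congrArg Prod.fst h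
  have hfi : f i = t' := by
    rw [hef] at hmem
    obtain ⟨j, _, hj⟩ := Finset.mem_image.mp hmem
    have hji : j = i := congrArg Prod.fst hj
    subst hji
    exact (Prod.mk.injEq _ _ _ _ ▸ hj).2
  have hwi : w (i, f i) < -t := by
    rw [hfi]
    exact (Finset.mem_filter.mp ht').2
  have hterm : ∀ j ∈ Finset.univ.erase i, w (j, f j) ≤ t / ((r:ℝ) - 1) := by
    intro j hj
    have hjne : j ≠ i := (Finset.mem_erase.mp hj).1
    have hfn : f j ∉ U j := by
      intro hin
      exact havoid j hjne (f j) hin (by rw [hef]; exact Finset.mem_image_of_mem _ (Finset.mem_univ j))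
    by_cases hc : ((Finset.univ.filter fun x : Fin n => w (j, x) < 0).card : ℝ) ≤ ε * n
    · simp only [hU, if_pos hc, Finset.mem_filter, Finset.mem_univ, true_and] at hfn
      linarith [not_le.mp hfn]
    · simp only [hU, if_neg hc, Finset.mem_filter, Finset.mem_univ, true_and] at hfn
      have h1 : w (j, f j) < 0 := not_le.mp hfn
      have h2 : (0:ℝ) ≤ t / ((r:ℝ) - 1) := div_nonneg ht (le_of_lt hr1)
      linarith
  have hsum := hw.2 e he
  rw [hef, Finset.sum_image hinj] at hsum
  have hsplit : ∑ j : Fin r, w (j, f j)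
      = w (i, f i) + ∑ j ∈ Finset.univ.erase i, w (j, f j) :=
    (Finset.add_sum_erase _ _ (Finset.mem_univ i)).symm
  have hb : ∑ j ∈ Finset.univ.erase i, w (j, f j)
      ≤ ((Finset.univ.erase i).card : ℝ) * (t / ((r:ℝ) - 1)) := by
    have := Finset.sum_le_card_nsmul _ _ _ hterm
    simpa [nsmul_eq_mul] using this
  have hcard : ((Finset.univ.erase i).card : ℝ) = (r:ℝ) - 1 := by
    rw [Finset.card_erase_of_mem (Finset.mem_univ i), Finset.card_univ]
    simp
    rw [Nat.cast_sub (by omega)]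
    simp
  rw [hcard] at hb
  have : ((r:ℝ) - 1) * (t / ((r:ℝ) - 1)) = t := mul_div_cancel₀ t (ne_of_gt hr1)
  rw [this] at hb
  rw [hsplit] at hsum
  linarith
end

section
/- Let r ≥ 2, let k = (2r²)^r, and let c = 1/(2r²). With high probability as n → ∞, the k-out random subhypergraph of K_n^(r) contains no independent set of size at least cn. -/
/-
A first-moment argument. Write `N = C(n-1, r-1)` for the number of edges at a vertex and
`m = ⌈cn⌉`. An `m`-set `X` is independent exactly when every `v ∈ X` draws all `k` of its
edges among the `N - M` edges at `v` not inside `X`, where `M = C(m-1, r-1)`; this has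
probability `(C(N-M, k) / C(N, k))^m ≤ exp (-k m M / N)`. Since `M / N ≥ ((m-r+1)/n)^(r-1)`
and `k c^r ≥ 1`, Bernoulli's inequality gives `k m M / N ≥ n - (r-1)²/c`, so a union bound
over the at most `2^n` candidate sets bounds the failure probability by
`exp ((r-1)²/c) (2/e)^n → 0`.
-/

open Finset

noncomputable section
open scoped Classical

/-- A sample point of the `k`-out model on the complete `r`-graph on `[n]`:
for each vertex `v`, a `k`-element set `E_v` of `r`-subsets of `[n]` containing `v`. -/
abbrev KOutSample (n r k : ℕ) :=
  ∀ v : Fin n, {E : Finset (Finset (Fin n)) // E.card = k ∧ ∀ e ∈ E, v ∈ e ∧ e.card = r}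

/-- The edge set `⋃ v, E_v` of the `k`-out random subhypergraph. -/
def kOutEdges {n r k : ℕ} (ω : KOutSample n r k) : Finset (Finset (Fin n)) :=
  Finset.univ.filter fun e => ∃ v : Fin n, e ∈ (ω v).1

/-- Probability of an event under the uniform (product) distribution of the `k`-out model. -/
def kOutPr (n r k : ℕ) (P : KOutSample n r k → Prop) : ℝ :=
  ((Finset.univ.filter fun ω : KOutSample n r k => P ω).card : ℝ) /
    (Fintype.card (KOutSample n r k))

open Filter Topology Real

theorem Nat.descFactorial_mul_pow_le_descFactorial_mul_pow {a b : ℕ} (h : b ≤ a) (k : ℕ) :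
    b.descFactorial k * a ^ k ≤ a.descFactorial k * b ^ k := by
  induction k with
  | zero => simp
  | succ k ih =>
    have step : (b - k) * a ≤ (a - k) * b := by
      rw [Nat.sub_mul, Nat.sub_mul, mul_comm b a]
      exact Nat.sub_le_sub_left (Nat.mul_le_mul_left k h) (a * b)
    calc b.descFactorial (k + 1) * a ^ (k + 1)
        = ((b - k) * a) * (b.descFactorial k * a ^ k) := by
          rw [Nat.descFactorial_succ, pow_succ]; ring
      _ ≤ ((a - k) * b) * (a.descFactorial k * b ^ k) := Nat.mul_le_mul step ih
      _ = a.descFactorial (k + 1) * b ^ (k + 1) := by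
          rw [Nat.descFactorial_succ, pow_succ]; ring

theorem Nat.choose_mul_pow_le_choose_mul_pow {a b : ℕ} (h : b ≤ a) (k : ℕ) :
    b.choose k * a ^ k ≤ a.choose k * b ^ k := by
  have := Nat.descFactorial_mul_pow_le_descFactorial_mul_pow h k
  rw [Nat.descFactorial_eq_factorial_mul_choose, Nat.descFactorial_eq_factorial_mul_choose,
    mul_assoc, mul_assoc] at this
  exact Nat.le_of_mul_le_mul_left this k.factorial_pos

theorem Nat.add_one_sub_le_choose {a j : ℕ} (hj : 1 ≤ j) (hja : j ≤ a) :
    a + 1 - j ≤ a.choose j := by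
  induction a generalizing j with
  | zero => omega
  | succ a ih =>
    obtain rfl | hj := hj.eq_or_lt
    · simp
    obtain ⟨i, rfl⟩ : ∃ i, j = i + 1 := ⟨j - 1, by omega⟩
    have := ih (j := i) (by omega) (by omega)
    rw [Nat.choose_succ_succ]
    omega

theorem choose_sub_div_choose_le_exp {N M : ℕ} (hN : 0 < N) (hMN : M ≤ N) (k : ℕ) :
    ((N - M).choose k : ℝ) / N.choose k ≤ exp (-(k * M / N)) := by
  rcases (N.choose k).eq_zero_or_pos with h | h
  · simp only [h, Nat.cast_zero, div_zero]; positivity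
  have hNR : (0 : ℝ) < N := by exact_mod_cast hN
  calc ((N - M).choose k : ℝ) / N.choose k ≤ (1 - M / N) ^ k := by
        rw [div_le_iff₀ (by exact_mod_cast h), one_sub_div hNR.ne', div_pow,
          ← Nat.cast_sub hMN, div_mul_eq_mul_div, le_div_iff₀ (by positivity)]
        exact_mod_cast (Nat.choose_mul_pow_le_choose_mul_pow (Nat.sub_le N M) k).trans_eq
          (mul_comm _ _)
    _ ≤ exp (-(M / N)) ^ k := by
        have : 0 ≤ 1 - (M : ℝ) / N := by
          rw [sub_nonneg, div_le_one hNR]; exact_mod_cast hMN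
        gcongr
        exact one_sub_le_exp_neg _
    _ = exp (-(k * M / N)) := by rw [← exp_nat_mul]; ring_nf

theorem sub_div_pow_le_choose_pred_div_choose_pred {j m n : ℕ} (hjm : j < m) (hmn : m ≤ n) :
    ((m - j : ℝ) / n) ^ j ≤ ((m - 1).choose j : ℝ) / (n - 1).choose j := by
  have hfac : (0 : ℝ) < j.factorial := by exact_mod_cast j.factorial_pos
  have hsub : (((m - 1 + 1 - j : ℕ) : ℝ)) = m - j := by
    rw [Nat.cast_sub (by omega), Nat.cast_add, Nat.cast_sub (by omega)]; ring
  calc ((m - j : ℝ) / n) ^ j = ((m - j) ^ j / j.factorial) / (n ^ j / j.factorial) := by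
        rw [div_pow, div_div_div_cancel_right₀ hfac.ne']
    _ ≤ ((m - 1).choose j : ℝ) / (n - 1).choose j := by
        gcongr
        · exact_mod_cast Nat.choose_pos (by omega)
        · rw [← hsub]; exact Nat.pow_le_choose j (m - 1)
        · refine (Nat.choose_le_pow_div j (n - 1)).trans ?_
          gcongr
          exact_mod_cast Nat.sub_le n 1

theorem sub_sq_div_le_mul_pow (j : ℕ) {c k m n : ℝ} (hc : 0 < c) (hn : 0 < n)
    (hk : 1 ≤ k * c ^ (j + 1)) (hjn : j ≤ c * n) (hm : c * n ≤ m) :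
    n - j ^ 2 / c ≤ k * m * ((m - j) / n) ^ j := by
  have hk0 : 0 ≤ k := (pos_of_mul_pos_left (by linarith) (pow_pos hc (j + 1)).le).le
  have hx : 0 ≤ 1 + -(j / (c * n)) := by linarith [div_le_one_of_le₀ hjn (by positivity)]
  calc n - j ^ 2 / c = n * (1 + j * -(j / (c * n))) := by field_simp; ring
    _ ≤ n * (1 + -(j / (c * n))) ^ j := by gcongr; exact one_add_mul_le_pow (by linarith) j
    _ ≤ k * c ^ (j + 1) * (n * (1 + -(j / (c * n))) ^ j) :=
        le_mul_of_one_le_left (by positivity) hk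
    _ = k * (c * n) * ((c * n - j) / n) ^ j := by
        have : (c * n - j) / n = c * (1 + -(j / (c * n))) := by field_simp; ring
        rw [this, mul_pow]; ring
    _ ≤ k * m * ((m - j) / n) ^ j := by
        have : 0 ≤ c * n - j := by linarith
        have : 0 ≤ m := by linarith
        gcongr

theorem choose_mul_choose_sub_div_choose_pow_le_exp {j k m n : ℕ} {c : ℝ} (hc : 0 < c)
    (hk : 1 ≤ k * c ^ (j + 1)) (hjn : j + 1 ≤ c * n) (hm : c * n ≤ m) (hmn : m ≤ n) :
    n.choose m * ((((n - 1).choose j - (m - 1).choose j).choose k : ℝ)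
        / ((n - 1).choose j).choose k) ^ m
      ≤ exp (j ^ 2 / c) * (2 * exp (-1)) ^ n := by
  have hjm : j < m := by exact_mod_cast (show (j : ℝ) < m by linarith)
  have hn : (0 : ℝ) < n := by exact_mod_cast (show 0 < n by omega)
  have hN : 0 < (n - 1).choose j := Nat.choose_pos (by omega)
  have hMN : (m - 1).choose j ≤ (n - 1).choose j := Nat.choose_le_choose j (by omega)
  have key : n - j ^ 2 / c ≤ k * m * (((m - 1).choose j : ℝ) / (n - 1).choose j) :=
    (sub_sq_div_le_mul_pow j hc hn hk (by linarith) hm).trans <| by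
      gcongr
      exact sub_div_pow_le_choose_pred_div_choose_pred hjm hmn
  calc _ ≤ 2 ^ n * exp (-(k * ((m - 1).choose j) / (n - 1).choose j)) ^ m := by
        gcongr
        · exact_mod_cast Nat.choose_le_two_pow n m
        · exact choose_sub_div_choose_le_exp hN hMN k
    _ = 2 ^ n * exp (-(k * m * (((m - 1).choose j : ℝ) / (n - 1).choose j))) := by
        rw [← exp_nat_mul]; ring_nf
    _ ≤ 2 ^ n * exp (-(n - j ^ 2 / c)) := by gcongr
    _ = exp (j ^ 2 / c) * (2 * exp (-1)) ^ n := by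
        rw [mul_pow, ← exp_nat_mul, show -(n - j ^ 2 / c : ℝ) = j ^ 2 / c + n * -1 by ring,
          exp_add]
        ring

theorem two_mul_exp_neg_one_lt_one : 2 * exp (-1) < 1 := by
  rw [exp_neg, ← div_eq_mul_inv, div_lt_one (exp_pos 1)]
  simpa [one_add_one_eq_two] using add_one_lt_exp one_ne_zero

section Counting

variable {β : Type*} [Fintype β]

theorem card_filter_subtype_forall_mem (p q : β → Prop) [DecidablePred p] [DecidablePred q]
    (k : ℕ) [Fintype {E : Finset β // E.card = k ∧ ∀ e ∈ E, p e}] :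
    #{E : {E : Finset β // E.card = k ∧ ∀ e ∈ E, p e} | ∀ e ∈ E.1, q e}
      = (#{e | p e ∧ q e}).choose k := by
  rw [← card_powersetCard, ← card_map (Function.Embedding.subtype _)]
  congr 1
  ext E
  simp only [Finset.mem_map, mem_filter, mem_univ, true_and, Function.Embedding.subtype_apply,
    Subtype.exists, exists_and_right, exists_eq_right, mem_powersetCard, subset_iff]
  grind

theorem card_subtype_card_eq_forall_mem (p : β → Prop) [DecidablePred p] (k : ℕ)
    [Fintype {E : Finset β // E.card = k ∧ ∀ e ∈ E, p e}] :
    Fintype.card {E : Finset β // E.card = k ∧ ∀ e ∈ E, p e} = (#{e | p e}).choose k := by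
  simpa using card_filter_subtype_forall_mem p (fun _ => True) k

theorem card_filter_mem_card_eq_subset [DecidableEq β] {S : Finset β} {v : β} (hv : v ∈ S)
    (j : ℕ) : #{e : Finset β | (v ∈ e ∧ #e = j + 1) ∧ e ⊆ S} = (#S - 1).choose j := by
  have h := card_filter_powersetCard_subset {v} S (j + 1) (by simpa) (by simp)
  rw [card_singleton, add_tsub_cancel_right] at h
  rw [← h]
  congr 1
  ext e
  simp only [mem_filter, mem_univ, true_and, mem_powersetCard, singleton_subset_iff]
  tauto

end Counting

abbrev KOutChoice (n r k : ℕ) (v : Fin n) :=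
  {E : Finset (Finset (Fin n)) // E.card = k ∧ ∀ e ∈ E, v ∈ e ∧ e.card = r}

section KOutProbability

variable {n r k : ℕ}

theorem kOutPr_nonneg (P : KOutSample n r k → Prop) : 0 ≤ kOutPr n r k P := by
  unfold kOutPr; positivity

theorem kOutPr_mono {P Q : KOutSample n r k → Prop} (h : ∀ ω, P ω → Q ω) :
    kOutPr n r k P ≤ kOutPr n r k Q := by
  unfold kOutPr
  gcongr with ω
  exact h ω

theorem kOutPr_not [Nonempty (KOutSample n r k)] (P : KOutSample n r k → Prop) :
    kOutPr n r k (fun ω => ¬ P ω) = 1 - kOutPr n r k P := by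
  unfold kOutPr
  rw [eq_sub_iff_add_eq, ← add_div, div_eq_one_iff_eq (by positivity), ← Nat.cast_add,
    add_comm, card_filter_add_card_filter_not, card_univ]

theorem kOutPr_exists_le_sum {ι : Type*} (s : Finset ι) (P : ι → KOutSample n r k → Prop) :
    kOutPr n r k (fun ω => ∃ i ∈ s, P i ω) ≤ ∑ i ∈ s, kOutPr n r k (P i) := by
  unfold kOutPr
  rw [← sum_div]
  push_cast [← Nat.cast_sum]
  gcongr
  refine (card_le_card fun ω hω => ?_).trans card_biUnion_le
  obtain ⟨i, hi, hω⟩ := (mem_filter.1 hω).2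
  exact mem_biUnion.2 ⟨i, hi, mem_filter.2 ⟨mem_univ ω, hω⟩⟩

theorem kOutPr_forall_vertex (p : ∀ v, KOutChoice n r k v → Prop) [∀ v, DecidablePred (p v)] :
    kOutPr n r k (fun ω => ∀ v, p v (ω v))
      = ∏ v, (#{E | p v E} : ℝ) / Fintype.card (KOutChoice n r k v) := by
  unfold kOutPr
  rw [Fintype.card_pi, Nat.cast_prod, prod_div_distrib, ← Nat.cast_prod, ← Nat.cast_prod,
    ← Fintype.card_piFinset]
  congr 3
  ext ω
  simp

theorem forall_mem_kOutEdges_not_subset_iff {ω : KOutSample n r k} {X : Finset (Fin n)} :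
    (∀ e ∈ kOutEdges ω, ¬ e ⊆ X) ↔ ∀ v, ∀ e ∈ (ω v).1, ¬ e ⊆ X := by
  simp only [kOutEdges, mem_filter, mem_univ, true_and, forall_exists_index]
  exact forall_comm

theorem tendsto_kOutPr_one_of_not_le {P : ∀ n, KOutSample n r k → Prop} {g : ℕ → ℝ}
    (hne : ∀ᶠ n in atTop, Nonempty (KOutSample n r k)) (hg : Tendsto g atTop (𝓝 0))
    (hP : ∀ᶠ n in atTop, kOutPr n r k (fun ω => ¬ P n ω) ≤ g n) :
    Tendsto (fun n => kOutPr n r k (P n)) atTop (𝓝 1) := by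
  have hbad : Tendsto (fun n => kOutPr n r k (fun ω => ¬ P n ω)) atTop (𝓝 0) :=
    squeeze_zero' (.of_forall fun n => kOutPr_nonneg _) hP hg
  have hgood := (tendsto_const_nhds (x := (1 : ℝ))).sub hbad
  rw [sub_zero] at hgood
  refine hgood.congr' ?_
  filter_upwards [hne] with n hn
  rw [kOutPr_not, sub_sub_cancel]

end KOutProbability

section KOutIndependence

variable {n : ℕ}

theorem card_kOutChoice (j k : ℕ) (v : Fin n) :
    Fintype.card (KOutChoice n (j + 1) k v) = ((n - 1).choose j).choose k := by
  refine (card_subtype_card_eq_forall_mem (fun e => v ∈ e ∧ #e = j + 1) k).trans ?_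
  simpa using congrArg (Nat.choose · k) (card_filter_mem_card_eq_subset (mem_univ v) j)

theorem card_kOutChoice_forall_not_subset (j k : ℕ) {X : Finset (Fin n)} {v : Fin n}
    (hv : v ∈ X) :
    #{E : KOutChoice n (j + 1) k v | ∀ e ∈ E.1, ¬ e ⊆ X}
      = ((n - 1).choose j - (#X - 1).choose j).choose k := by
  convert card_filter_subtype_forall_mem (fun e => v ∈ e ∧ #e = j + 1) (¬ · ⊆ X) k using 3
  have hsplit :=
    card_filter_add_card_filter_not (s := {e : Finset (Fin n) | v ∈ e ∧ #e = j + 1}) (· ⊆ X)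
  rw [filter_filter, filter_filter, card_filter_mem_card_eq_subset hv] at hsplit
  have hall := card_filter_mem_card_eq_subset (mem_univ v) j
  simp only [subset_univ, and_true, card_univ, Fintype.card_fin] at hall
  omega

theorem kOutSample_nonempty {j k : ℕ} (hk : k ≤ (n - 1).choose j) :
    Nonempty (KOutSample n (j + 1) k) := by
  have (v : Fin n) : Nonempty (KOutChoice n (j + 1) k v) :=
    Fintype.card_pos_iff.1 (by rw [card_kOutChoice]; exact Nat.choose_pos hk)
  infer_instance

theorem kOutPr_forall_not_subset_le (j k : ℕ) (X : Finset (Fin n)) :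
    kOutPr n (j + 1) k (fun ω => ∀ e ∈ kOutEdges ω, ¬ e ⊆ X)
      ≤ ((((n - 1).choose j - (#X - 1).choose j).choose k : ℝ) / ((n - 1).choose j).choose k)
        ^ #X := by
  simp only [forall_mem_kOutEdges_not_subset_iff]
  rw [kOutPr_forall_vertex fun v E => ∀ e ∈ E.1, ¬ e ⊆ X, ← prod_const,
    ← Fintype.prod_ite_mem X]
  refine prod_le_prod (fun v _ => by positivity) fun v _ => ?_
  split_ifs with hv
  · rw [card_kOutChoice_forall_not_subset j k hv, card_kOutChoice]
  · exact div_le_one_of_le₀ (mod_cast card_le_univ _) (by positivity)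

theorem kOutPr_exists_card_eq_le (j k m : ℕ) :
    kOutPr n (j + 1) k
        (fun ω => ∃ X : Finset (Fin n), #X = m ∧ ∀ e ∈ kOutEdges ω, ¬ e ⊆ X)
      ≤ n.choose m * ((((n - 1).choose j - (m - 1).choose j).choose k : ℝ)
          / ((n - 1).choose j).choose k) ^ m := by
  calc _ ≤ ∑ X ∈ univ.powersetCard m,
          kOutPr n (j + 1) k (fun ω => ∀ e ∈ kOutEdges ω, ¬ e ⊆ X) :=
        (kOutPr_mono fun ω ⟨X, hX, h⟩ => ⟨X, mem_powersetCard_univ.2 hX, h⟩).trans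
          (kOutPr_exists_le_sum _ _)
    _ ≤ ∑ X ∈ univ.powersetCard m, ((((n - 1).choose j - (m - 1).choose j).choose k : ℝ)
          / ((n - 1).choose j).choose k) ^ m :=
        sum_le_sum fun X hX => mem_powersetCard_univ.1 hX ▸ kOutPr_forall_not_subset_le j k X
    _ = _ := by rw [sum_const, card_powersetCard, card_univ, Fintype.card_fin, nsmul_eq_mul]

theorem kOutPr_exists_card_ge_le {j k : ℕ} {c : ℝ} (hc : 0 < c) (hc1 : c ≤ 1)
    (hk : 1 ≤ k * c ^ (j + 1)) (hjn : j + 1 ≤ c * n) :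
    kOutPr n (j + 1) k
        (fun ω => ∃ X : Finset (Fin n), (∀ e ∈ kOutEdges ω, ¬ e ⊆ X) ∧ c * n ≤ #X)
      ≤ exp (j ^ 2 / c) * (2 * exp (-1)) ^ n := by
  have hmn : ⌈c * n⌉₊ ≤ n := Nat.ceil_le.2 (mul_le_of_le_one_left n.cast_nonneg hc1)
  refine le_trans (kOutPr_mono ?_) ((kOutPr_exists_card_eq_le j k ⌈c * n⌉₊).trans
    (choose_mul_choose_sub_div_choose_pow_le_exp hc hk hjn (Nat.le_ceil _) hmn))
  rintro ω ⟨X, hX, hcX⟩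
  obtain ⟨Y, hYX, hY⟩ := exists_subset_card_eq (Nat.ceil_le.2 hcX)
  exact ⟨Y, hY, fun e he heY => hX e he (heY.trans hYX)⟩

end KOutIndependence

/-- For `r ≥ 2`, `k = (2r²)^r` and `c = 1/(2r²)`, w.h.p. the `k`-out
subhypergraph of `K_n^(r)` has no independent set of size at least `cn`. -/
theorem stmt9 (r : ℕ) (hr : 2 ≤ r) :
    Filter.Tendsto (fun n : ℕ =>
        kOutPr n r ((2 * r ^ 2) ^ r) (fun ω =>
          ∀ X : Finset (Fin n), (∀ e ∈ kOutEdges ω, ¬ e ⊆ X) →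
            (X.card : ℝ) < (1 / (2 * (r : ℝ) ^ 2)) * n))
      Filter.atTop (nhds 1) := by
  obtain ⟨j, rfl⟩ : ∃ j, r = j + 1 := ⟨r - 1, by omega⟩
  set c : ℝ := 1 / (2 * ((j + 1 : ℕ) : ℝ) ^ 2)
  have hc : 0 < c := by positivity
  have hc1 : c ≤ 1 := by
    rw [div_le_one (by positivity)]; push_cast; nlinarith [j.cast_nonneg (α := ℝ)]
  have hk : 1 ≤ ((2 * (j + 1) ^ 2) ^ (j + 1) : ℕ) * c ^ (j + 1) := by
    simp only [c]; push_cast; rw [← mul_pow, mul_one_div_cancel (by positivity), one_pow]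
  refine tendsto_kOutPr_one_of_not_le (g := fun n => exp (j ^ 2 / c) * (2 * exp (-1)) ^ n) ?_ ?_ ?_
  · filter_upwards [eventually_ge_atTop ((2 * (j + 1) ^ 2) ^ (j + 1) + j + 1)] with n hn
    exact kOutSample_nonempty
      ((by omega : _ ≤ n - 1 + 1 - j).trans (Nat.add_one_sub_le_choose (by omega) (by omega)))
  · simpa using (tendsto_pow_atTop_nhds_zero_of_lt_one (by positivity)
      two_mul_exp_neg_one_lt_one).const_mul (exp (j ^ 2 / c))
  · filter_upwards [(tendsto_natCast_atTop_atTop.const_mul_atTop hc).eventually_ge_atTop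
      ((j : ℝ) + 1)] with n hn
    refine (kOutPr_mono fun ω h => ?_).trans (kOutPr_exists_card_ge_le hc hc1 hk hn)
    simpa using h
end
end

section
/- With the coupled random r-graph setup below, for any function g : ℕ → ℝ with g(n) → ∞ and g(n) = o(log n), with high probability as n → ∞ every independent set of G(σ) has size less than Z = n(log n)^{−1/r}. -/
open Finset MeasureTheory Filter

noncomputable section
open scoped Classical

/-- The index set: `r`-element subsets of `[n]`. -/
abbrev RSubsets (n r : ℕ) := {S : Finset (Fin n) // S.card = r}

/-- The coupled model: independent `ξ_S`, uniform on `[0,1]`, one for each `r`-subset `S`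
of `[n]`; formally the product of uniform measures on the coordinates. -/
def xiMeasure (n r : ℕ) : Measure (RSubsets n r → ℝ) :=
  Measure.pi fun _ => volume.restrict (Set.Icc (0 : ℝ) 1)

/-! A first-moment argument. A fixed set of `k` vertices is independent in `G(σ)` with
probability `(1 - σ)^C(k,r) ≤ exp (-σ C(k,r))`, so some independent set of size `k = ⌈Z⌉` exists
with probability at most `C(n,k) exp (-σ C(k,r))`. Since `g = o(log n)`, eventually
`σ ≥ log n / (2 C(n-1,r-1))`, and as `Z^r = n^r / log n` this gives `σ C(k,r) ≥ n / (2^(r+1) r!)`.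
On the other hand `log C(n,k) ≤ 2Z (1 + log (n/Z))`, which is `o(n)` because
`n / Z = (log n)^(1/r) → ∞`. -/

open scoped ENNReal Topology Nat
open Real

lemma tendsto_measure_nhds_one_of_compl {ι : Type*} {l : Filter ι} {Ω : ι → Type*}
    [∀ i, MeasurableSpace (Ω i)] {μ : ∀ i, Measure (Ω i)} [∀ i, IsProbabilityMeasure (μ i)]
    {s : ∀ i, Set (Ω i)} (h : Tendsto (fun i => μ i (s i)ᶜ) l (𝓝 0)) :
    Tendsto (fun i => μ i (s i)) l (𝓝 1) := by
  have hlow : Tendsto (fun i => 1 - μ i (s i)ᶜ) l (𝓝 1) := by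
    simpa using ENNReal.Tendsto.sub tendsto_const_nhds h (Or.inl ENNReal.one_ne_top)
  refine tendsto_of_tendsto_of_tendsto_of_le_of_le hlow tendsto_const_nhds (fun i => ?_)
    fun i => prob_le_one
  rw [tsub_le_iff_right, ← measure_univ (μ := μ i), ← Set.union_compl_self (s i)]
  exact measure_union_le _ _

lemma tendsto_log_natCast_atTop : Tendsto (fun n : ℕ => log n) atTop atTop :=
  tendsto_log_atTop.comp tendsto_natCast_atTop_atTop

lemma tendsto_mul_log_rpow_neg_atTop (a : ℝ) :
    Tendsto (fun x : ℝ => x * log x ^ (-a)) atTop atTop := by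
  have hpos : ∀ᶠ x : ℝ in atTop, 0 < log x ^ a / x ^ (1 : ℝ) := by
    filter_upwards [eventually_gt_atTop 1] with x hx
    have := log_pos hx
    positivity
  have h0 := (isLittleO_log_rpow_rpow_atTop a one_pos).tendsto_div_nhds_zero
  refine (tendsto_inv_nhdsGT_zero.comp (tendsto_nhdsWithin_iff.2 ⟨h0, hpos⟩)).congr' ?_
  filter_upwards [eventually_gt_atTop 1] with x hx
  simp [rpow_neg (log_pos hx).le, div_eq_mul_inv]

lemma tendsto_one_add_log_div_atTop :
    Tendsto (fun y : ℝ => (1 + log y) / y) atTop (𝓝 0) :=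
  ((Asymptotics.isLittleO_const_id_atTop 1).add isLittleO_log_id_atTop).tendsto_div_nhds_zero

lemma choose_le_exp_mul_one_add_log (n k : ℕ) :
    (n.choose k : ℝ) ≤ exp (k * (1 + log (n / k))) := by
  rcases Nat.eq_zero_or_pos k with rfl | hk
  · simp
  rcases Nat.eq_zero_or_pos n with rfl | hn
  · simpa [Nat.choose_eq_zero_of_lt hk] using (exp_pos _).le
  have hk' : (0 : ℝ) < k := by exact_mod_cast hk
  calc (n.choose k : ℝ) ≤ n ^ k / k ! := Nat.choose_le_pow_div k n
    _ = (n / k) ^ k * (k ^ k / k !) := by rw [div_pow]; field_simp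
    _ ≤ (n / k) ^ k * exp k := by
        gcongr
        exact pow_div_factorial_le_exp (x := (k : ℝ)) hk'.le k
    _ = exp (k * (1 + log (n / k))) := by
        rw [mul_one_add, exp_add, ← log_pow, exp_log (by positivity), mul_comm]

lemma choose_ceil_le_exp {n : ℕ} {z : ℝ} (hz : 1 ≤ z) (hzn : z ≤ n) :
    (n.choose ⌈z⌉₊ : ℝ) ≤ exp (2 * z * (1 + log (n / z))) := by
  have hn : (0 : ℝ) < n := by linarith
  have hzk : z ≤ ⌈z⌉₊ := Nat.le_ceil z
  have hkz : (⌈z⌉₊ : ℝ) ≤ 2 * z := by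
    linarith [Nat.ceil_lt_add_one (zero_le_one.trans hz)]
  have hlog : log (n / ⌈z⌉₊) ≤ log (n / z) :=
    log_le_log (by positivity) (div_le_div_of_nonneg_left (by positivity) (by positivity) hzk)
  have hlog_nonneg : 0 ≤ log (n / z) := log_nonneg ((one_le_div (by positivity)).2 hzn)
  refine (choose_le_exp_mul_one_add_log n _).trans (exp_le_exp.2 ?_)
  calc (⌈z⌉₊ : ℝ) * (1 + log (n / ⌈z⌉₊)) ≤ ⌈z⌉₊ * (1 + log (n / z)) := by gcongr
    _ ≤ 2 * z * (1 + log (n / z)) := by gcongr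

lemma div_two_pow_div_factorial_le_choose {k r : ℕ} {z : ℝ} (h2r : 2 * r ≤ z) (hzk : z ≤ k) :
    (z / 2) ^ r / r ! ≤ k.choose r := by
  have hr0 : (0 : ℝ) ≤ r := r.cast_nonneg
  have hrk : r ≤ k + 1 := (Nat.cast_le.1 (by linarith : (r : ℝ) ≤ k)).trans k.le_succ
  refine le_trans ?_ (Nat.pow_le_choose r k)
  gcongr
  · linarith
  · rw [Nat.cast_sub hrk]
    push_cast
    linarith

instance : IsProbabilityMeasure (volume.restrict (Set.Icc (0 : ℝ) 1)) := ⟨by simp⟩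

instance (n r : ℕ) : IsProbabilityMeasure (xiMeasure n r) := by
  unfold xiMeasure
  infer_instance

def IndependentIn {n r : ℕ} (ξ : RSubsets n r → ℝ) (σ : ℝ) (X : Finset (Fin n)) : Prop :=
  ∀ S : RSubsets n r, ξ S ≤ σ → ¬ S.1 ⊆ X

section Independence

variable {n r : ℕ} {ξ : RSubsets n r → ℝ} {σ : ℝ}

lemma IndependentIn.mono {X Y : Finset (Fin n)} (hX : IndependentIn ξ σ X) (hYX : Y ⊆ X) :
    IndependentIn ξ σ Y :=
  fun S hS hSY => hX S hS (hSY.trans hYX)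

lemma card_rSubsets_subset (X : Finset (Fin n)) :
    #{S : RSubsets n r | S.1 ⊆ X} = X.card.choose r := by
  rw [← card_powersetCard]
  refine card_bij (fun S _ => S.1) (fun S hS => ?_) (fun _ _ _ _ => Subtype.ext)
    (fun T hT => ?_)
  · exact mem_powersetCard.2 ⟨(mem_filter.1 hS).2, S.2⟩
  · obtain ⟨hTX, hT⟩ := mem_powersetCard.1 hT
    exact ⟨⟨T, hT⟩, mem_filter.2 ⟨mem_univ _, hTX⟩, rfl⟩

lemma xiMeasure_independentIn (hσ : 0 ≤ σ) (X : Finset (Fin n)) :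
    xiMeasure n r {ξ | IndependentIn ξ σ X} = ENNReal.ofReal (1 - σ) ^ X.card.choose r := by
  have hpi : {ξ : RSubsets n r → ℝ | IndependentIn ξ σ X}
      = Set.univ.pi fun S => if S.1 ⊆ X then Set.Ioi σ else Set.univ := by
    ext ξ
    simp only [IndependentIn, Set.mem_pi, Set.mem_univ, true_implies]
    refine forall_congr' fun S => ?_
    split_ifs with hS <;> simp [hS]
  have hIoi : volume.restrict (Set.Icc (0 : ℝ) 1) (Set.Ioi σ) = ENNReal.ofReal (1 - σ) := by
    have : Set.Ioi σ ∩ Set.Icc 0 1 = Set.Ioc σ 1 := by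
      ext x
      simp only [Set.mem_inter_iff, Set.mem_Ioi, Set.mem_Icc, Set.mem_Ioc]
      exact ⟨fun h => ⟨h.1, h.2.2⟩, fun h => ⟨h.1, hσ.trans h.1.le, h.2⟩⟩
    rw [Measure.restrict_apply measurableSet_Ioi, this, Real.volume_Ioc]
  rw [xiMeasure, hpi, Measure.pi_pi]
  simp only [apply_ite (volume.restrict (Set.Icc (0 : ℝ) 1)), hIoi, measure_univ]
  rw [prod_ite, prod_const, prod_const_one, mul_one, card_rSubsets_subset]

lemma xiMeasure_exists_independentIn_le (hσ : 0 ≤ σ) (k : ℕ) :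
    xiMeasure n r {ξ | ∃ X, IndependentIn ξ σ X ∧ k ≤ X.card}
      ≤ ENNReal.ofReal (n.choose k * exp (-σ * k.choose r)) := by
  have hsub : {ξ : RSubsets n r → ℝ | ∃ X, IndependentIn ξ σ X ∧ k ≤ X.card}
      ⊆ ⋃ Y ∈ powersetCard k univ, {ξ | IndependentIn ξ σ Y} := by
    rintro ξ ⟨X, hX, hkX⟩
    obtain ⟨Y, hYX, hY⟩ := exists_subset_card_eq hkX
    exact Set.mem_biUnion (mem_powersetCard.2 ⟨subset_univ Y, hY⟩) (hX.mono hYX)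
  have hexp :
      ENNReal.ofReal (1 - σ) ^ k.choose r ≤ ENNReal.ofReal (exp (-σ * k.choose r)) := by
    rw [mul_comm, exp_nat_mul, ENNReal.ofReal_pow (exp_nonneg _)]
    gcongr
    linarith [add_one_le_exp (-σ)]
  calc xiMeasure n r _
      ≤ ∑ Y ∈ powersetCard k univ, xiMeasure n r {ξ | IndependentIn ξ σ Y} :=
        (measure_mono hsub).trans (measure_biUnion_finset_le _ _)
    _ = n.choose k * ENNReal.ofReal (1 - σ) ^ k.choose r := by
        rw [sum_congr rfl fun Y hY => by
            rw [xiMeasure_independentIn hσ, (mem_powersetCard.1 hY).2],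
          sum_const, card_powersetCard, card_univ, Fintype.card_fin, nsmul_eq_mul]
    _ ≤ ENNReal.ofReal (n.choose k * exp (-σ * k.choose r)) := by
        rw [ENNReal.ofReal_mul (Nat.cast_nonneg _), ENNReal.ofReal_natCast]
        gcongr

end Independence

-- The paper's `Z`.
def critSize (r n : ℕ) : ℝ := n * log n ^ (-(1 : ℝ) / r)

section CritSize

variable {r n : ℕ}

lemma tendsto_critSize_atTop (r : ℕ) : Tendsto (critSize r) atTop atTop :=
  ((tendsto_mul_log_rpow_neg_atTop (1 / r)).comp tendsto_natCast_atTop_atTop).congr fun n => by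
    rw [critSize, neg_div]
    rfl

lemma critSize_le (hL : 1 ≤ log n) : critSize r n ≤ n :=
  mul_le_of_le_one_right n.cast_nonneg <| rpow_le_one_of_one_le_of_nonpos hL <|
    div_nonpos_of_nonpos_of_nonneg (by norm_num) r.cast_nonneg

lemma critSize_eq_div (hL : 0 < log n) : critSize r n = n / log n ^ (r : ℝ)⁻¹ := by
  rw [critSize, neg_div, rpow_neg hL.le, one_div, div_eq_mul_inv]

lemma div_le_mul_choose_ceil_critSize {σ : ℝ} (hr : 1 ≤ r) (hrn : r ≤ n) (hL : 0 < log n)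
    (h2r : 2 * r ≤ critSize r n) (hσ : log n / (2 * (n - 1).choose (r - 1)) ≤ σ) :
    n / (2 ^ (r + 1) * r !) ≤ σ * (⌈critSize r n⌉₊).choose r := by
  obtain ⟨m, rfl⟩ : ∃ m, r = m + 1 := ⟨r - 1, by omega⟩
  rw [Nat.add_sub_cancel] at hσ
  set Z := critSize (m + 1) n with hZ
  have hn : (n : ℝ) ≠ 0 := by exact_mod_cast (by omega : n ≠ 0)
  have hD0 : (0 : ℝ) < (n - 1).choose m := by exact_mod_cast Nat.choose_pos (by omega)
  have hD : ((n - 1).choose m : ℝ) ≤ n ^ m := by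
    exact_mod_cast (Nat.choose_le_pow _ _).trans (Nat.pow_le_pow_left (Nat.sub_le n 1) m)
  have hZpow : Z ^ (m + 1) = n ^ (m + 1) / log n := by
    rw [hZ, critSize, mul_pow, ← rpow_natCast (log n ^ _), ← rpow_mul hL.le]
    push_cast
    rw [div_mul_cancel₀ _ (by positivity), rpow_neg_one, div_eq_mul_inv]
  calc (n : ℝ) / (2 ^ (m + 1 + 1) * (m + 1)!)
      = log n / (2 * n ^ m) * ((Z / 2) ^ (m + 1) / (m + 1)!) := by
        rw [div_pow, hZpow]
        field_simp
        ring
    _ ≤ log n / (2 * (n - 1).choose m) * ((⌈Z⌉₊).choose (m + 1)) := by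
        have hZ0 : 0 ≤ Z := le_trans (by positivity) h2r
        refine mul_le_mul (by gcongr) ?_ (by positivity) (div_nonneg hL.le (by positivity))
        exact div_two_pow_div_factorial_le_choose h2r (Nat.le_ceil Z)
    _ ≤ σ * (⌈Z⌉₊).choose (m + 1) := by gcongr

end CritSize

lemma tendsto_critSize_entropy_sub_atBot {r : ℕ} (hr : 1 ≤ r) :
    Tendsto (fun n : ℕ =>
        2 * critSize r n * (1 + log (n / critSize r n)) - n / (2 ^ (r + 1) * r !)) atTop atBot := by
  -- With `y = (log n)^(1/r) = n / Z` the expression is `n (2 (1 + log y) / y - 1 / (2^(r+1) r!))`.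
  have hy : Tendsto (fun n : ℕ => log n ^ (r : ℝ)⁻¹) atTop atTop :=
    (tendsto_rpow_atTop (by positivity)).comp tendsto_log_natCast_atTop
  have hneg := ((tendsto_one_add_log_div_atTop.comp hy).const_mul 2).sub_const
    (2 ^ (r + 1) * r ! : ℝ)⁻¹
  refine (tendsto_natCast_atTop_atTop.atTop_mul_neg (by norm_num; positivity) hneg).congr' ?_
  filter_upwards [tendsto_log_natCast_atTop.eventually_gt_atTop 0, eventually_gt_atTop 0]
    with n hL hn
  have hn' : (n : ℝ) ≠ 0 := by positivity
  rw [critSize_eq_div hL, div_div_cancel₀ hn', Function.comp_apply]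
  field_simp

lemma tendsto_choose_mul_exp_neg_nhds_zero {r : ℕ} (hr : 1 ≤ r) {σ : ℕ → ℝ}
    (hσ : ∀ᶠ n : ℕ in atTop, log n / (2 * (n - 1).choose (r - 1)) ≤ σ n) :
    Tendsto (fun n : ℕ =>
        n.choose ⌈critSize r n⌉₊ * exp (-σ n * (⌈critSize r n⌉₊).choose r)) atTop (𝓝 0) := by
  refine tendsto_of_tendsto_of_tendsto_of_le_of_le' tendsto_const_nhds
    (tendsto_exp_atBot.comp (tendsto_critSize_entropy_sub_atBot hr))
    (Eventually.of_forall fun n => by positivity) ?_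
  filter_upwards [hσ, tendsto_log_natCast_atTop.eventually_ge_atTop 1,
    (tendsto_critSize_atTop r).eventually_ge_atTop (2 * r), eventually_ge_atTop r]
    with n hσn hL h2r hrn
  have hZ : 1 ≤ critSize r n := le_trans (by exact_mod_cast (by omega : 1 ≤ 2 * r)) h2r
  calc _ ≤ exp (2 * critSize r n * (1 + log (n / critSize r n)))
          * exp (-(n / (2 ^ (r + 1) * r !))) := by
        gcongr
        · exact choose_ceil_le_exp hZ (critSize_le hL)
        · rw [neg_mul, neg_le_neg_iff]
          exact div_le_mul_choose_ceil_critSize hr hrn (by linarith) h2r hσn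
    _ = _ := by rw [← exp_add, ← sub_eq_add_neg]; rfl

theorem tendsto_xiMeasure_forall_independentIn_card_lt {r : ℕ} (hr : 1 ≤ r) {σ : ℕ → ℝ}
    (hσ : ∀ᶠ n : ℕ in atTop, log n / (2 * (n - 1).choose (r - 1)) ≤ σ n) :
    Tendsto (fun n : ℕ => xiMeasure n r
        {ξ | ∀ X : Finset (Fin n), IndependentIn ξ (σ n) X → (X.card : ℝ) < critSize r n})
      atTop (𝓝 1) := by
  refine tendsto_measure_nhds_one_of_compl ?_
  have hbound := ENNReal.tendsto_ofReal (tendsto_choose_mul_exp_neg_nhds_zero hr hσ)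
  rw [ENNReal.ofReal_zero] at hbound
  refine tendsto_of_tendsto_of_tendsto_of_le_of_le' tendsto_const_nhds hbound
    (Eventually.of_forall fun _ => zero_le) ?_
  filter_upwards [hσ] with n hσn
  have hcompl : {ξ : RSubsets n r → ℝ |
        ∀ X : Finset (Fin n), IndependentIn ξ (σ n) X → (X.card : ℝ) < critSize r n}ᶜ
      ⊆ {ξ | ∃ X, IndependentIn ξ (σ n) X ∧ ⌈critSize r n⌉₊ ≤ X.card} := by
    intro ξ hξ
    simp only [Set.mem_compl_iff, Set.mem_ofPred_eq, not_forall, not_lt, exists_prop] at hξ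
    obtain ⟨X, hX, hcard⟩ := hξ
    exact ⟨X, hX, Nat.ceil_le.2 hcard⟩
  exact (measure_mono hcompl).trans
    (xiMeasure_exists_independentIn_le (le_trans (by positivity) hσn) _)

theorem stmt14_general (r : ℕ) (hr : 2 ≤ r) (g : ℕ → ℝ)
    (hgo : g =o[atTop] fun n : ℕ => Real.log n) :
    Tendsto (fun n : ℕ =>
        xiMeasure n r {ξ : RSubsets n r → ℝ |
          ∀ X : Finset (Fin n),
            (∀ S : RSubsets n r,
              ξ S ≤ (Real.log n - g n) / (Nat.choose (n - 1) (r - 1) : ℝ) → ¬ S.1 ⊆ X) →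
            (X.card : ℝ) < n * Real.log n ^ (-(1 : ℝ) / r)})
      atTop (nhds 1) := by
  refine tendsto_xiMeasure_forall_independentIn_card_lt (by omega) ?_
  filter_upwards [hgo.bound one_half_pos,
    tendsto_log_natCast_atTop.eventually_ge_atTop 0] with n hg hL
  rw [norm_eq_abs, norm_eq_abs, abs_of_nonneg hL] at hg
  have hg' : g n ≤ log n / 2 := by linarith [le_abs_self (g n)]
  rw [div_mul_eq_div_div]
  exact div_le_div_of_nonneg_right (by linarith) (Nat.cast_nonneg _)

/-- For `g → ∞` with `g = o(log n)`, w.h.p. every independent set of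
`G(σ)` (whose edges are the `S` with `ξ_S ≤ σ`) has size less than `Z = n (log n)^{-1/r}`,
where `σ = (log n − g(n))/C(n−1,r−1)`. -/
theorem stmt14 (r : ℕ) (hr : 2 ≤ r) (g : ℕ → ℝ)
    (hgtop : Tendsto g atTop atTop)
    (hgo : g =o[atTop] fun n : ℕ => Real.log n) :
    Tendsto (fun n : ℕ =>
        xiMeasure n r {ξ : RSubsets n r → ℝ |
          ∀ X : Finset (Fin n),
            (∀ S : RSubsets n r,
              ξ S ≤ (Real.log n - g n) / (Nat.choose (n - 1) (r - 1) : ℝ) → ¬ S.1 ⊆ X) →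
            (X.card : ℝ) < n * Real.log n ^ (-(1 : ℝ) / r)})
      atTop (nhds 1) :=
  stmt14_general r hr g hgo
end
end
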